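/- arXiv:2004.06661 — 6 statements merged into one kernel-verified Lean document; each statement's English description precedes it below -/
import Mathlib

section
/- Let A be a real m×k matrix such that AᵀA is invertible, let B = (AᵀA)⁻¹, let a ∈ ℝᵐ, and set ê = (AᵀA)⁻¹Aᵀa and r = ‖a − A(AᵀA)⁻¹Aᵀa‖². If r > 0 and Ã = [A a] is the m×(k+1) matrix obtained by appending a as a last column, then ÃᵀÃ is invertible and (ÃᵀÃ)⁻¹ equals the (k+1)×(k+1) matrix whose top-left k×k block is B (with zeros in the last row and column) plus (1/r)·(ê, −1)(ê, −1)ᵀ, where (ê, −1) ∈ ℝ^{k+1} is ê with −1 appended as last entry. -/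
/-!
The Gram matrix of `[A A']` is the block matrix with blocks `AᵀA`, `AᵀA'`, `A'ᵀA`, `A'ᵀA'`.
Its Schur complement with respect to `AᵀA` is `A'ᵀ(1 - P)A' = RᵀR`, where `P` is the projection
onto the columns of `A` and `R = A' - A E` with `E = (AᵀA)⁻¹AᵀA'` is the least-squares residual.
The block inversion formula then gives the inverse as `(AᵀA)⁻¹` padded with zeros plus
`[E; -1] (RᵀR)⁻¹ [E; -1]ᵀ`. For a single column `a`, `RᵀR` is the `1 × 1` matrix `r`, and the
blocks are indexed along `Fin k ⊕ Fin 1 ≃ Fin (k + 1)`.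
-/

open Matrix

noncomputable section

def appendCol {m k : ℕ} (A : Matrix (Fin m) (Fin k) ℝ) (a : Fin m → ℝ) :
    Matrix (Fin m) (Fin (k + 1)) ℝ :=
  Matrix.of fun i => Fin.snoc (A i) (a i)

def padZero {k : ℕ} (B : Matrix (Fin k) (Fin k) ℝ) :
    Matrix (Fin (k + 1)) (Fin (k + 1)) ℝ :=
  Matrix.of fun i j =>
    if hi : (i : ℕ) < k then if hj : (j : ℕ) < k then B ⟨i, hi⟩ ⟨j, hj⟩ else 0 else 0

namespace Matrix

variable {m n p R : Type*}

def lstsqCoeff [Fintype m] [Fintype n] [DecidableEq n] [CommRing R]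
    (A : Matrix m n R) (A' : Matrix m p R) : Matrix n p R :=
  (Aᵀ * A)⁻¹ * (Aᵀ * A')

def lstsqResidual [Fintype m] [Fintype n] [DecidableEq n] [CommRing R]
    (A : Matrix m n R) (A' : Matrix m p R) : Matrix m p R :=
  A' - A * lstsqCoeff A A'

theorem transpose_fromCols_mul_fromCols [Fintype m] [Semiring R]
    (A : Matrix m n R) (A' : Matrix m p R) :
    (fromCols A A')ᵀ * fromCols A A' = fromBlocks (Aᵀ * A) (Aᵀ * A') (A'ᵀ * A) (A'ᵀ * A') := by
  rw [transpose_fromCols, fromRows_mul_fromCols]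

theorem transpose_nonsing_inv_transpose_mul_self [Fintype m] [Fintype n] [DecidableEq n]
    [CommRing R] (A : Matrix m n R) : ((Aᵀ * A)⁻¹)ᵀ = (Aᵀ * A)⁻¹ := by
  rw [transpose_nonsing_inv, transpose_mul, transpose_transpose]

theorem transpose_lstsqCoeff [Fintype m] [Fintype n] [DecidableEq n] [CommRing R]
    (A : Matrix m n R) (A' : Matrix m p R) :
    (lstsqCoeff A A')ᵀ = A'ᵀ * A * (Aᵀ * A)⁻¹ := by
  rw [lstsqCoeff, transpose_mul, transpose_nonsing_inv_transpose_mul_self, transpose_mul,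
    transpose_transpose]

theorem transpose_lstsqResidual_mul_lstsqResidual [Fintype m] [Fintype n] [DecidableEq n]
    [CommRing R] (A : Matrix m n R) (A' : Matrix m p R) (hA : IsUnit (Aᵀ * A)) :
    (lstsqResidual A A')ᵀ * lstsqResidual A A' = A'ᵀ * A' - A'ᵀ * A * (Aᵀ * A)⁻¹ * (Aᵀ * A') := by
  have hcancel : ∀ X : Matrix n p R, (Aᵀ * A)⁻¹ * (Aᵀ * (A * X)) = X := fun X => by
    rw [← Matrix.mul_assoc Aᵀ, ← Matrix.mul_assoc,
      nonsing_inv_mul _ ((isUnit_iff_isUnit_det _).mp hA), Matrix.one_mul]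
  rw [lstsqResidual, transpose_sub, transpose_mul, transpose_lstsqCoeff]
  simp only [lstsqCoeff, Matrix.sub_mul, Matrix.mul_sub, Matrix.mul_assoc, hcancel]
  abel

theorem fromRows_neg_one_mul_mul_transpose [Fintype p] [DecidableEq p] [Ring R]
    (E : Matrix n p R) (S : Matrix p p R) :
    fromRows E (-1) * S * (fromRows E (-1))ᵀ = fromBlocks (E * S * Eᵀ) (-(E * S)) (-(S * Eᵀ)) S := by
  rw [transpose_fromRows, fromRows_mul, fromRows_mul_fromCols]
  simp

theorem inv_transpose_fromCols_mul_fromCols [Fintype m] [Fintype n] [Fintype p] [DecidableEq n]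
    [DecidableEq p] [CommRing R] (A : Matrix m n R) (A' : Matrix m p R)
    (hA : IsUnit (Aᵀ * A)) (hR : IsUnit ((lstsqResidual A A')ᵀ * lstsqResidual A A')) :
    IsUnit ((fromCols A A')ᵀ * fromCols A A') ∧
      ((fromCols A A')ᵀ * fromCols A A')⁻¹ =
        fromBlocks (Aᵀ * A)⁻¹ 0 0 0 +
          fromRows (lstsqCoeff A A') (-1) * ((lstsqResidual A A')ᵀ * lstsqResidual A A')⁻¹ *
            (fromRows (lstsqCoeff A A') (-1))ᵀ := by
  rw [transpose_lstsqResidual_mul_lstsqResidual A A' hA] at hR ⊢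
  let := hA.invertible
  let : Invertible (A'ᵀ * A' - A'ᵀ * A * ⅟(Aᵀ * A) * (Aᵀ * A')) := by
    rw [invOf_eq_nonsing_inv]; exact hR.invertible
  let := fromBlocks₁₁Invertible (Aᵀ * A) (Aᵀ * A') (A'ᵀ * A) (A'ᵀ * A')
  rw [transpose_fromCols_mul_fromCols]
  refine ⟨isUnit_of_invertible _, ?_⟩
  rw [← invOf_eq_nonsing_inv, invOf_fromBlocks₁₁_eq, fromRows_neg_one_mul_mul_transpose,
    fromBlocks_add, transpose_lstsqCoeff]
  simp only [invOf_eq_nonsing_inv, lstsqCoeff, zero_add, Matrix.mul_assoc]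

theorem transpose_replicateCol_mul_replicateCol [Fintype m] [CommRing R] (w : m → R) :
    (replicateCol (Fin 1) w)ᵀ * replicateCol (Fin 1) w = (w ⬝ᵥ w) • 1 := by
  ext i j
  simp [Subsingleton.elim i j, Matrix.mul_apply, dotProduct]

theorem fromRows_replicateCol_neg_one [Ring R] (v : n → R) :
    fromRows (replicateCol (Fin 1) v) (-1) = replicateCol (Fin 1) (Sum.elim v (-1 : Fin 1 → R)) := by
  ext (i | i) j
  · simp
  · simp [Subsingleton.elim i j]

theorem inv_transpose_fromCols_replicateCol_mul {K : Type*} [Fintype m] [Fintype n]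
    [DecidableEq n] [Field K] (A : Matrix m n K) (a : m → K) (hA : IsUnit (Aᵀ * A))
    (hr : (a - A *ᵥ ((Aᵀ * A)⁻¹ *ᵥ (Aᵀ *ᵥ a))) ⬝ᵥ (a - A *ᵥ ((Aᵀ * A)⁻¹ *ᵥ (Aᵀ *ᵥ a))) ≠ 0) :
    IsUnit ((fromCols A (replicateCol (Fin 1) a))ᵀ * fromCols A (replicateCol (Fin 1) a)) ∧
      ((fromCols A (replicateCol (Fin 1) a))ᵀ * fromCols A (replicateCol (Fin 1) a))⁻¹ =
        fromBlocks (Aᵀ * A)⁻¹ 0 0 0 +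
          ((a - A *ᵥ ((Aᵀ * A)⁻¹ *ᵥ (Aᵀ *ᵥ a))) ⬝ᵥ (a - A *ᵥ ((Aᵀ * A)⁻¹ *ᵥ (Aᵀ *ᵥ a))))⁻¹ •
            vecMulVec (Sum.elim ((Aᵀ * A)⁻¹ *ᵥ (Aᵀ *ᵥ a)) (-1))
              (Sum.elim ((Aᵀ * A)⁻¹ *ᵥ (Aᵀ *ᵥ a)) (-1)) := by
  set e := (Aᵀ * A)⁻¹ *ᵥ (Aᵀ *ᵥ a)
  set r := (a - A *ᵥ e) ⬝ᵥ (a - A *ᵥ e)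
  have hcoeff : lstsqCoeff A (replicateCol (Fin 1) a) = replicateCol (Fin 1) e := by
    rw [lstsqCoeff, ← replicateCol_mulVec, ← replicateCol_mulVec]
  have hresid : lstsqResidual A (replicateCol (Fin 1) a) = replicateCol (Fin 1) (a - A *ᵥ e) := by
    rw [lstsqResidual, hcoeff, ← replicateCol_mulVec]
    rfl
  have hS : IsUnit (r • 1 : Matrix (Fin 1) (Fin 1) K) := by
    rw [isUnit_iff_isUnit_det, det_smul, det_one]
    simpa using hr
  have hSinv : (r • 1 : Matrix (Fin 1) (Fin 1) K)⁻¹ = r⁻¹ • 1 :=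
    inv_eq_left_inv (by rw [smul_mul_smul_comm, inv_mul_cancel₀ hr, one_smul, Matrix.mul_one])
  have hblock := inv_transpose_fromCols_mul_fromCols A (replicateCol (Fin 1) a) hA
  rw [hresid, transpose_replicateCol_mul_replicateCol, hSinv, hcoeff,
    fromRows_replicateCol_neg_one] at hblock
  obtain ⟨hunit, hinv⟩ := hblock hS
  refine ⟨hunit, hinv.trans ?_⟩
  rw [vecMulVec_eq (Fin 1), transpose_replicateCol, Matrix.mul_smul, Matrix.mul_one, smul_mul]
  rfl

end Matrix

theorem Fin.snoc_eq_sumElim_comp {α : Type*} {k : ℕ} (v : Fin k → α) (t : α) :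
    (Fin.snoc v t : Fin (k + 1) → α) = Sum.elim v (fun _ : Fin 1 => t) ∘ finSumFinEquiv.symm := by
  ext i
  induction i using Fin.lastCases <;> simp

theorem vecMulVec_snoc_eq_submatrix {α : Type*} [Mul α] {k : ℕ} (v w : Fin k → α) (s t : α) :
    vecMulVec (Fin.snoc v s : Fin (k + 1) → α) (Fin.snoc w t) =
      (vecMulVec (Sum.elim v fun _ : Fin 1 => s) (Sum.elim w fun _ : Fin 1 => t)).submatrix
        finSumFinEquiv.symm finSumFinEquiv.symm := by
  rw [Fin.snoc_eq_sumElim_comp, Fin.snoc_eq_sumElim_comp]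
  rfl

theorem appendCol_eq_submatrix_fromCols {m k : ℕ} (A : Matrix (Fin m) (Fin k) ℝ) (a : Fin m → ℝ) :
    appendCol A a = (fromCols A (replicateCol (Fin 1) a)).submatrix id finSumFinEquiv.symm := by
  ext i j
  simp only [appendCol, of_apply, Fin.snoc_eq_sumElim_comp]
  induction j using Fin.lastCases <;> simp

theorem padZero_eq_submatrix_fromBlocks {k : ℕ} (B : Matrix (Fin k) (Fin k) ℝ) :
    padZero B = (fromBlocks B 0 0 0 : Matrix (Fin k ⊕ Fin 1) (Fin k ⊕ Fin 1) ℝ).submatrix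
      finSumFinEquiv.symm finSumFinEquiv.symm := by
  ext i j
  induction i using Fin.lastCases <;> induction j using Fin.lastCases <;> simp [padZero]

/-- Matrix inversion lemma for column addition. -/
theorem stmt0 {m k : ℕ} (A : Matrix (Fin m) (Fin k) ℝ) (a : Fin m → ℝ)
    (hA : IsUnit (Aᵀ * A))
    (B : Matrix (Fin k) (Fin k) ℝ) (hB : B = (Aᵀ * A)⁻¹)
    (e : Fin k → ℝ) (he : e = (Aᵀ * A)⁻¹ *ᵥ (Aᵀ *ᵥ a))
    (r : ℝ)
    (hr : r = (a - A *ᵥ ((Aᵀ * A)⁻¹ *ᵥ (Aᵀ *ᵥ a))) ⬝ᵥ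
              (a - A *ᵥ ((Aᵀ * A)⁻¹ *ᵥ (Aᵀ *ᵥ a))))
    (hrpos : 0 < r)
    (Atil : Matrix (Fin m) (Fin (k + 1)) ℝ) (hAtil : Atil = appendCol A a) :
    IsUnit (Atilᵀ * Atil) ∧
      (Atilᵀ * Atil)⁻¹ =
        padZero B + (1 / r) • vecMulVec (Fin.snoc e (-1)) (Fin.snoc e (-1)) := by
  subst hB he hAtil
  obtain ⟨hunit, hinv⟩ := inv_transpose_fromCols_replicateCol_mul A a hA (hr ▸ hrpos.ne')
  rw [appendCol_eq_submatrix_fromCols, transpose_submatrix,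
    ← submatrix_mul _ _ _ _ _ Function.bijective_id,
    isUnit_submatrix_equiv, inv_submatrix_equiv, hinv, padZero_eq_submatrix_fromBlocks,
    vecMulVec_snoc_eq_submatrix, hr, one_div]
  exact ⟨hunit, rfl⟩

end
end

section
/- Let Ã = [A a] be a real m×(k+1) matrix (a is the last column) such that ÃᵀÃ is invertible, and let B̃ = (ÃᵀÃ)⁻¹. Then AᵀA is invertible and (AᵀA)⁻¹ = B̃' − (1/B̃(k+1,k+1))·u uᵀ, where B̃' is the k×k matrix obtained from B̃ by deleting its last row and last column, u ∈ ℝᵏ is the last column of B̃ with its last entry deleted, and B̃(k+1,k+1) is the last diagonal entry of B̃ (which is nonzero). -/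
/-!
Write `M = ÃᵀÃ` and `B = M⁻¹` in block form for the split `k + 1`: `M'`, `B'` are the leading
`k × k` blocks, `c`, `u` the tops of the last columns, `vᵀ` the left part of the last row of `B`
and `d` its corner. Two of the block equations of `M B = 1` read `M' B' + c vᵀ = 1` and
`M' u + d c = 0`, so `M' (B' - d⁻¹ u vᵀ) = 1` as soon as `d ≠ 0`. For the Gram matrix,
`M' = AᵀA` and `B` is positive definite, hence symmetric (`v = u`) with `d > 0`.
-/

open Matrix

noncomputable section

namespace Matrix

theorem submatrix_castSucc_mul_sub_vecMulVec_eq_one {K : Type*} [Field K] {k : ℕ}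
    {M B : Matrix (Fin (k + 1)) (Fin (k + 1)) K}
    (hMB : M * B = 1) (hd : B (Fin.last k) (Fin.last k) ≠ 0) :
    M.submatrix Fin.castSucc Fin.castSucc *
        (B.submatrix Fin.castSucc Fin.castSucc - (B (Fin.last k) (Fin.last k))⁻¹ •
          vecMulVec (fun i => B i.castSucc (Fin.last k)) (fun j => B (Fin.last k) j.castSucc)) =
      1 := by
  set d := B (Fin.last k) (Fin.last k)
  set u : Fin k → K := fun i => B i.castSucc (Fin.last k)
  set v : Fin k → K := fun j => B (Fin.last k) j.castSucc
  set c : Fin k → K := fun i => M i.castSucc (Fin.last k)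
  have hsplit : ∀ i q, (M * B) i.castSucc q =
      ∑ l : Fin k, M i.castSucc l.castSucc * B l.castSucc q + c i * B (Fin.last k) q := by
    intro i q
    rw [mul_apply, Fin.sum_univ_castSucc]
  have hB' : M.submatrix Fin.castSucc Fin.castSucc * B.submatrix Fin.castSucc Fin.castSucc =
      1 - vecMulVec c v := by
    ext i j
    have := hsplit i j.castSucc
    simp only [hMB, one_apply, Fin.castSucc_inj] at this
    simp only [mul_apply, submatrix_apply, sub_apply, one_apply, vecMulVec_apply, v]
    linear_combination -this
  have hu : M.submatrix Fin.castSucc Fin.castSucc *ᵥ u = -(d • c) := by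
    ext i
    have := hsplit i (Fin.last k)
    rw [hMB, one_apply_ne (Fin.castSucc_lt_last i).ne] at this
    simp only [mulVec, dotProduct, submatrix_apply, Pi.neg_apply, Pi.smul_apply, smul_eq_mul, u]
    linear_combination -this
  rw [mul_sub, mul_smul_comm, mul_vecMulVec, hu, hB', neg_vecMulVec, smul_neg, ← smul_vecMulVec,
    smul_smul, inv_mul_cancel₀ hd, one_smul, sub_neg_eq_add, sub_add_cancel]

theorem posDef_transpose_mul_self_of_isUnit {m n : Type*} [Fintype m] [Fintype n] [DecidableEq n]
    (A : Matrix m n ℝ) (h : IsUnit (Aᵀ * A)) : (Aᵀ * A).PosDef := by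
  have hinj : Function.Injective (Aᵀ * A).mulVec := mulVec_injective_iff_isUnit.mpr h
  rw [← conjTranspose_eq_transpose_of_trivial] at hinj ⊢
  refine .conjTranspose_mul_self A (Function.Injective.of_comp (f := Aᴴ.mulVec) ?_)
  simpa only [Function.comp_def, mulVec_mulVec] using hinj

end Matrix

theorem appendCol_transpose_mul_self_submatrix_castSucc {m k : ℕ} (A : Matrix (Fin m) (Fin k) ℝ)
    (a : Fin m → ℝ) :
    ((appendCol A a)ᵀ * appendCol A a).submatrix Fin.castSucc Fin.castSucc = Aᵀ * A := by
  ext i j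
  simp [mul_apply, appendCol]

/-- Matrix inversion lemma for column removal. -/
theorem stmt1 {m k : ℕ} (A : Matrix (Fin m) (Fin k) ℝ) (a : Fin m → ℝ)
    (Atil : Matrix (Fin m) (Fin (k + 1)) ℝ) (hAtil : Atil = appendCol A a)
    (h : IsUnit (Atilᵀ * Atil))
    (Btil : Matrix (Fin (k + 1)) (Fin (k + 1)) ℝ) (hBtil : Btil = (Atilᵀ * Atil)⁻¹) :
    IsUnit (Aᵀ * A) ∧
      Btil (Fin.last k) (Fin.last k) ≠ 0 ∧
      (Aᵀ * A)⁻¹ =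
        (Matrix.of fun i j : Fin k => Btil i.castSucc j.castSucc) -
          (1 / Btil (Fin.last k) (Fin.last k)) •
            vecMulVec (fun i : Fin k => Btil i.castSucc (Fin.last k))
              (fun i : Fin k => Btil i.castSucc (Fin.last k)) := by
  subst hAtil
  have hB : Btil.PosDef := hBtil ▸ (posDef_transpose_mul_self_of_isUnit _ h).inv
  have hd : 0 < Btil (Fin.last k) (Fin.last k) := hB.diag_pos
  have hsymm : ∀ i j, Btil i j = Btil j i := fun i j => by
    simpa using (hB.isHermitian.apply i j).symm
  have hright := submatrix_castSucc_mul_sub_vecMulVec_eq_one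
    (hBtil ▸ mul_nonsing_inv _ ((isUnit_iff_isUnit_det _).mp h)) hd.ne'
  simp only [appendCol_transpose_mul_self_submatrix_castSucc, hsymm (Fin.last k)] at hright
  refine ⟨.of_mul_eq_one _ hright, hd.ne', ?_⟩
  rw [inv_eq_right_inv hright, one_div]
  rfl

end
end

section
/- Let M be a real m×n matrix satisfying the RIP of order 2k with constant δ ∈ (0,1). Let x̃ ∈ ℝⁿ be a vector with support L̃, let T ⊆ {1,…,n} be a set of indices disjoint from L̃ with |T| + |L̃| ≤ 2k and T nonempty, and let ỹ = M x̃. Then M_TᵀM_T is invertible, ‖P_T ỹ‖² ≤ δ² ‖ỹ‖², and ‖R_T ỹ‖² ≥ (1 − δ²) ‖ỹ‖². -/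
/-! The Gram matrix `M_TᵀM_T` is positive definite because the RIP gives
`‖M_T w‖² ≥ (1 - δ)‖w‖²`. Write `P_T ỹ = M w` with `w` supported on `T`. As `P_T` is an
orthogonal projection, `⟨M x̃, M w⟩ = ‖M w‖²`, while `x̃` and `w` have disjoint supports, so
`x̃ ⊥ w`. The upper RIP bound for `δ x̃ + w` and the lower one for `δ x̃ - w` (both `2k`-sparse),
weighted by `1 - δ` and `1 + δ`, combine to `‖M w‖² ≤ δ² ‖M x̃‖²`. Finally
`‖R_T ỹ‖² = ‖ỹ‖² - ‖P_T ỹ‖²`. -/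

open Matrix

noncomputable section

/-- `M` satisfies the RIP of order `s` with constant `δ` if
`(1−δ)‖v‖² ≤ ‖Mv‖² ≤ (1+δ)‖v‖²` for every `v` with at most `s` nonzero entries. -/
def RIP {m n : ℕ} (M : Matrix (Fin m) (Fin n) ℝ) (s : ℕ) (δ : ℝ) : Prop :=
  ∀ v : Fin n → ℝ, (∃ S : Finset (Fin n), S.card ≤ s ∧ ∀ i ∉ S, v i = 0) →
    (1 - δ) * (v ⬝ᵥ v) ≤ (M *ᵥ v) ⬝ᵥ (M *ᵥ v) ∧
      (M *ᵥ v) ⬝ᵥ (M *ᵥ v) ≤ (1 + δ) * (v ⬝ᵥ v)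

/-- `M_T`: the submatrix of `M` of the columns indexed by `T`. -/
def colsOf {m n : ℕ} (M : Matrix (Fin m) (Fin n) ℝ) (T : Finset (Fin n)) :
    Matrix (Fin m) {i // i ∈ T} ℝ :=
  M.submatrix id fun j => (j : Fin n)

/-- `P_T = M_T (M_TᵀM_T)⁻¹ M_Tᵀ`. -/
def projT {m n : ℕ} (M : Matrix (Fin m) (Fin n) ℝ) (T : Finset (Fin n)) :
    Matrix (Fin m) (Fin m) ℝ :=
  colsOf M T * ((colsOf M T)ᵀ * colsOf M T)⁻¹ * (colsOf M T)ᵀ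

/-- `R_T = I − P_T`. -/
def residT {m n : ℕ} (M : Matrix (Fin m) (Fin n) ℝ) (T : Finset (Fin n)) :
    Matrix (Fin m) (Fin m) ℝ :=
  1 - projT M T

section ExtendByZero

variable {ι R : Type*} [DecidableEq ι]

def extendByZero [Zero R] (T : Finset ι) (w : T → R) : ι → R :=
  fun i => if h : i ∈ T then w ⟨i, h⟩ else 0

lemma extendByZero_of_notMem [Zero R] {T : Finset ι} (w : T → R) {i : ι} (h : i ∉ T) :
    extendByZero T w i = 0 :=
  dif_neg h

variable [Fintype ι] [NonUnitalNonAssocSemiring R]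

lemma dotProduct_extendByZero (T : Finset ι) (g : ι → R) (w : T → R) :
    g ⬝ᵥ extendByZero T w = ∑ j : T, g j * w j := by
  rw [dotProduct, ← Finset.sum_subset T.subset_univ fun i _ hi => by
    rw [extendByZero_of_notMem w hi, mul_zero], ← Finset.sum_coe_sort T]
  exact Finset.sum_congr rfl fun j _ => by rw [extendByZero, dif_pos j.2]

lemma extendByZero_dotProduct_self (T : Finset ι) (w : T → R) :
    extendByZero T w ⬝ᵥ extendByZero T w = w ⬝ᵥ w := by
  rw [dotProduct_extendByZero]
  refine Finset.sum_congr rfl fun j _ => ?_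
  rw [extendByZero, dif_pos j.2]

end ExtendByZero

lemma mulVec_extendByZero {m n : ℕ} (M : Matrix (Fin m) (Fin n) ℝ) (T : Finset (Fin n))
    (w : T → ℝ) : M *ᵥ extendByZero T w = colsOf M T *ᵥ w :=
  funext fun i => dotProduct_extendByZero T (M i) w

lemma dotProduct_eq_zero_of_disjoint {ι R : Type*} [Fintype ι] [NonUnitalNonAssocSemiring R]
    {x w : ι → R} {S T : Finset ι} (hx : ∀ i ∉ S, x i = 0) (hw : ∀ i ∉ T, w i = 0)
    (hST : Disjoint S T) : x ⬝ᵥ w = 0 := by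
  refine Finset.sum_eq_zero fun i _ => ?_
  by_cases hi : i ∈ S
  · rw [hw i (Finset.disjoint_left.1 hST hi), mul_zero]
  · rw [hx i hi, zero_mul]

section Projection

variable {κ R : Type*} [Fintype κ] [CommRing R]

lemma dotProduct_self_mulVec_of_isSymm {P : Matrix κ κ R} (hsymm : P.IsSymm)
    (hidem : IsIdempotentElem P) (u : κ → R) :
    (P *ᵥ u) ⬝ᵥ (P *ᵥ u) = u ⬝ᵥ (P *ᵥ u) := by
  calc (P *ᵥ u) ⬝ᵥ (P *ᵥ u) = (u ᵥ* Pᵀ) ⬝ᵥ (P *ᵥ u) := by rw [vecMul_transpose]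
    _ = u ⬝ᵥ (P *ᵥ u) := by rw [← dotProduct_mulVec, hsymm.eq, mulVec_mulVec, hidem.eq]

lemma dotProduct_self_one_sub_mulVec {P : Matrix κ κ R} [DecidableEq κ] (hsymm : P.IsSymm)
    (hidem : IsIdempotentElem P) (u : κ → R) :
    ((1 - P) *ᵥ u) ⬝ᵥ ((1 - P) *ᵥ u) = u ⬝ᵥ u - (P *ᵥ u) ⬝ᵥ (P *ᵥ u) := by
  have hcross := dotProduct_self_mulVec_of_isSymm hsymm hidem u
  rw [sub_mulVec, one_mulVec]
  simp only [sub_dotProduct, dotProduct_sub]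
  rw [dotProduct_comm (P *ᵥ u) u, ← hcross]
  ring

end Projection

lemma projT_isSymm {m n : ℕ} (M : Matrix (Fin m) (Fin n) ℝ) (T : Finset (Fin n)) :
    (projT M T).IsSymm := by
  have hgram : ((colsOf M T)ᵀ * colsOf M T)ᵀ = (colsOf M T)ᵀ * colsOf M T := by
    rw [transpose_mul, transpose_transpose]
  rw [IsSymm, projT, transpose_mul, transpose_mul, transpose_transpose, transpose_nonsing_inv,
    hgram, Matrix.mul_assoc]

lemma projT_isIdempotentElem {m n : ℕ} (M : Matrix (Fin m) (Fin n) ℝ) (T : Finset (Fin n))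
    (hgram : IsUnit ((colsOf M T)ᵀ * colsOf M T)) : IsIdempotentElem (projT M T) := by
  set B := colsOf M T
  have hinv : (Bᵀ * B) * (Bᵀ * B)⁻¹ = 1 := mul_nonsing_inv _ ((isUnit_iff_isUnit_det _).1 hgram)
  calc B * (Bᵀ * B)⁻¹ * Bᵀ * (B * (Bᵀ * B)⁻¹ * Bᵀ)
      = B * (Bᵀ * B)⁻¹ * ((Bᵀ * B) * (Bᵀ * B)⁻¹ * Bᵀ) := by simp only [Matrix.mul_assoc]
    _ = B * (Bᵀ * B)⁻¹ * Bᵀ := by rw [hinv, Matrix.one_mul]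

namespace RIP

variable {m n s : ℕ} {M : Matrix (Fin m) (Fin n) ℝ} {δ : ℝ}

lemma injective_colsOf_mulVec (hRIP : RIP M s δ) (hδ1 : δ < 1) {T : Finset (Fin n)}
    (hT : T.card ≤ s) : Function.Injective (colsOf M T).mulVec := by
  refine (injective_iff_map_eq_zero (colsOf M T).mulVecLin).2 fun w hw => ?_
  have hlow := (hRIP (extendByZero T w) ⟨T, hT, fun i => extendByZero_of_notMem w⟩).1
  rw [extendByZero_dotProduct_self, mulVec_extendByZero, show colsOf M T *ᵥ w = 0 from hw,
    dotProduct_zero] at hlow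
  have hw0 : w ⬝ᵥ w = 0 :=
    le_antisymm (nonpos_of_mul_nonpos_right hlow (by linarith)) (dotProduct_self_star_nonneg w)
  exact dotProduct_self_eq_zero.1 hw0

lemma posDef_gram (hRIP : RIP M s δ) (hδ1 : δ < 1) {T : Finset (Fin n)} (hT : T.card ≤ s) :
    ((colsOf M T)ᵀ * colsOf M T).PosDef := by
  simpa only [conjTranspose_eq_transpose_of_trivial] using
    PosDef.conjTranspose_mul_self _ (hRIP.injective_colsOf_mulVec hδ1 hT)

lemma dotProduct_self_mulVec_le_of_disjoint (hRIP : RIP M s δ) (hδ0 : 0 < δ) (hδ1 : δ ≤ 1)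
    {x w : Fin n → ℝ} {S T : Finset (Fin n)} (hx : ∀ i ∉ S, x i = 0) (hw : ∀ i ∉ T, w i = 0)
    (hdisj : Disjoint T S) (hcard : T.card + S.card ≤ s)
    (hproj : (M *ᵥ x) ⬝ᵥ (M *ᵥ w) = (M *ᵥ w) ⬝ᵥ (M *ᵥ w)) :
    (M *ᵥ w) ⬝ᵥ (M *ᵥ w) ≤ δ ^ 2 * ((M *ᵥ x) ⬝ᵥ (M *ᵥ x)) := by
  have horth : x ⬝ᵥ w = 0 := dotProduct_eq_zero_of_disjoint hx hw hdisj.symm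
  have hsparse (t : ℝ) : ∃ U : Finset (Fin n), U.card ≤ s ∧ ∀ i ∉ U, (δ • x + t • w) i = 0 :=
    ⟨S ∪ T, (Finset.card_union_le S T).trans (by omega), fun i hi => by
      rw [Finset.mem_union, not_or] at hi
      simp [hx i hi.1, hw i hi.2]⟩
  have hnorm (t : ℝ) : (δ • x + t • w) ⬝ᵥ (δ • x + t • w) =
      δ ^ 2 * (x ⬝ᵥ x) + t ^ 2 * (w ⬝ᵥ w) := by
    simp only [dotProduct_add, add_dotProduct, dotProduct_smul, smul_dotProduct, smul_eq_mul]
    rw [horth, dotProduct_comm w x, horth]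
    ring
  have himage (t : ℝ) : (M *ᵥ (δ • x + t • w)) ⬝ᵥ (M *ᵥ (δ • x + t • w)) =
      δ ^ 2 * ((M *ᵥ x) ⬝ᵥ (M *ᵥ x)) + (2 * δ * t + t ^ 2) * ((M *ᵥ w) ⬝ᵥ (M *ᵥ w)) := by
    simp only [mulVec_add, mulVec_smul, dotProduct_add, add_dotProduct, dotProduct_smul,
      smul_dotProduct, smul_eq_mul]
    rw [hproj, dotProduct_comm (M *ᵥ w), hproj]
    ring
  have hup := (hRIP _ (hsparse 1)).2
  have hlow := (hRIP _ (hsparse (-1))).1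
  rw [hnorm, himage] at hup hlow
  -- `(1 - δ) * hup + (1 + δ) * hlow` reads `2δ ‖Mw‖² ≤ 2δ³ ‖Mx‖²`.
  nlinarith [mul_le_mul_of_nonneg_left hup (sub_nonneg.2 hδ1),
    mul_le_mul_of_nonneg_left hlow (by linarith : (0 : ℝ) ≤ 1 + δ)]

end RIP

theorem stmt5_general {m n k : ℕ} (M : Matrix (Fin m) (Fin n) ℝ) (δ : ℝ)
    (hδ0 : 0 < δ) (hδ1 : δ < 1) (hRIP : RIP M (2 * k) δ)
    (xt : Fin n → ℝ) (Lt : Finset (Fin n)) (hsupp : ∀ i, xt i ≠ 0 ↔ i ∈ Lt)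
    (T : Finset (Fin n)) (hdisj : Disjoint T Lt)
    (hcard : T.card + Lt.card ≤ 2 * k)
    (yt : Fin m → ℝ) (hyt : yt = M *ᵥ xt) :
    IsUnit ((colsOf M T)ᵀ * colsOf M T) ∧
      (projT M T *ᵥ yt) ⬝ᵥ (projT M T *ᵥ yt) ≤ δ ^ 2 * (yt ⬝ᵥ yt) ∧
      (residT M T *ᵥ yt) ⬝ᵥ (residT M T *ᵥ yt) ≥ (1 - δ ^ 2) * (yt ⬝ᵥ yt) := by
  set B := colsOf M T
  have hgram : IsUnit (Bᵀ * B) := (hRIP.posDef_gram hδ1 (by omega)).isUnit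
  have hsymm := projT_isSymm M T
  have hidem := projT_isIdempotentElem M T hgram
  set w := extendByZero T ((Bᵀ * B)⁻¹ *ᵥ (Bᵀ *ᵥ yt))
  have hPy : projT M T *ᵥ yt = M *ᵥ w := by
    rw [mulVec_extendByZero, projT, ← mulVec_mulVec, ← mulVec_mulVec]
  have hbound : (projT M T *ᵥ yt) ⬝ᵥ (projT M T *ᵥ yt) ≤ δ ^ 2 * (yt ⬝ᵥ yt) := by
    have hproj := dotProduct_self_mulVec_of_isSymm hsymm hidem yt
    rw [hPy, hyt] at hproj ⊢
    exact hRIP.dotProduct_self_mulVec_le_of_disjoint hδ0 hδ1.le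
      (fun i hi => not_not.1 (mt (hsupp i).1 hi)) (fun i => extendByZero_of_notMem _) hdisj
      hcard hproj.symm
  refine ⟨hgram, hbound, ?_⟩
  rw [residT, dotProduct_self_one_sub_mulVec hsymm hidem]
  linarith

theorem stmt5 {m n k : ℕ} (M : Matrix (Fin m) (Fin n) ℝ) (δ : ℝ)
    (hδ0 : 0 < δ) (hδ1 : δ < 1) (hRIP : RIP M (2 * k) δ)
    (xt : Fin n → ℝ) (Lt : Finset (Fin n)) (hsupp : ∀ i, xt i ≠ 0 ↔ i ∈ Lt)
    (T : Finset (Fin n)) (hdisj : Disjoint T Lt)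
    (hcard : T.card + Lt.card ≤ 2 * k) (hTne : T.Nonempty)
    (yt : Fin m → ℝ) (hyt : yt = M *ᵥ xt) :
    IsUnit ((colsOf M T)ᵀ * colsOf M T) ∧
      (projT M T *ᵥ yt) ⬝ᵥ (projT M T *ᵥ yt) ≤ δ ^ 2 * (yt ⬝ᵥ yt) ∧
      (residT M T *ᵥ yt) ⬝ᵥ (residT M T *ᵥ yt) ≥ (1 - δ ^ 2) * (yt ⬝ᵥ yt) :=
  stmt5_general M δ hδ0 hδ1 hRIP xt Lt hsupp T hdisj hcard yt hyt

end
end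

section
/- Let M ∈ ℝ^{m×n} have unit-norm columns and satisfy the RIP of order 2k with constant δ ∈ (0,1). Let x ∈ ℝⁿ have support L with |L| = k and let y = Mx. Let T ⊆ {1,…,n} with |T| ≤ k, set ζ = |T∖L| ≥ 1, let x̃ be x restricted to L∖T (zero elsewhere), and let ỹ = M x̃. Then there exists an index j ∈ T∖L such that ⟨R_{T∖j} m_(j), y⟩² / ‖R_{T∖j} m_(j)‖² ≤ (1/ζ)·(δ²/(1−δ))·‖ỹ‖², where T∖j = T ∖ {j}. -/
open Matrix

noncomputable section

namespace SAux
variable {m n : ℕ}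

/-- extension by zero -/
def extv {n : ℕ} (S : Finset (Fin n)) (v : {i // i ∈ S} → ℝ) : Fin n → ℝ :=
  fun i => if h : i ∈ S then v ⟨i, h⟩ else 0

lemma extv_support (S : Finset (Fin n)) (v : {i // i ∈ S} → ℝ) :
    ∀ i ∉ S, extv S v i = 0 := by
  intro i hi; simp [extv, hi]

lemma sum_ext (S : Finset (Fin n)) (f : Fin n → ℝ) (hf : ∀ i ∉ S, f i = 0) :
    ∑ i : Fin n, f i = ∑ i : {i // i ∈ S}, f i := by
  rw [Finset.sum_coe_sort S f]
  exact (Finset.sum_subset (Finset.subset_univ S) (fun x _ hx => hf x hx)).symm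

lemma mulVec_extv (M : Matrix (Fin m) (Fin n) ℝ) (S : Finset (Fin n)) (v : {i // i ∈ S} → ℝ) :
    M *ᵥ extv S v = colsOf M S *ᵥ v := by
  funext r
  show ∑ i : Fin n, M r i * extv S v i = ∑ i : {i // i ∈ S}, M r i * v i
  rw [sum_ext S (fun i => M r i * extv S v i)]
  · apply Finset.sum_congr rfl
    intro i _
    simp [extv, i.2]
  · intro i hi; simp [extv, hi]

lemma dot_extv (S : Finset (Fin n)) (v w : {i // i ∈ S} → ℝ) :
    extv S v ⬝ᵥ extv S w = v ⬝ᵥ w := by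
  show ∑ i : Fin n, extv S v i * extv S w i = ∑ i : {i // i ∈ S}, v i * w i
  rw [sum_ext S _ (fun i hi => by simp [extv, hi])]
  apply Finset.sum_congr rfl
  intro i _
  simp [extv, i.2]

lemma extv_eq_self (S : Finset (Fin n)) (w : Fin n → ℝ) (hw : ∀ i ∉ S, w i = 0) :
    extv S (fun i => w i) = w := by
  funext i
  by_cases h : i ∈ S
  · simp [extv, h]
  · simp [extv, h, hw i h]

lemma mulVec_restrict (M : Matrix (Fin m) (Fin n) ℝ) (S : Finset (Fin n)) (w : Fin n → ℝ)
    (hw : ∀ i ∉ S, w i = 0) : M *ᵥ w = colsOf M S *ᵥ (fun i : {i // i ∈ S} => w i) := by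
  conv_lhs => rw [← extv_eq_self S w hw]
  rw [mulVec_extv]



variable {m n : ℕ}

lemma dot_gram (M : Matrix (Fin m) (Fin n) ℝ) (S : Finset (Fin n)) (v : {i // i ∈ S} → ℝ) :
    v ⬝ᵥ (((colsOf M S)ᵀ * colsOf M S) *ᵥ v) =
      (colsOf M S *ᵥ v) ⬝ᵥ (colsOf M S *ᵥ v) := by
  rw [← mulVec_mulVec, dotProduct_mulVec, vecMul_transpose]

lemma gram_isUnit (M : Matrix (Fin m) (Fin n) ℝ) (S : Finset (Fin n))
    (h : ∀ v : {i // i ∈ S} → ℝ, v ≠ 0 →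
      0 < v ⬝ᵥ (((colsOf M S)ᵀ * colsOf M S) *ᵥ v)) :
    IsUnit ((colsOf M S)ᵀ * colsOf M S).det := by
  rw [isUnit_iff_ne_zero]
  intro hdet
  obtain ⟨v, hv, hGv⟩ := (Matrix.exists_mulVec_eq_zero_iff).2 hdet
  have := h v hv
  rw [hGv] at this
  simp at this

lemma colsT_mul_resid (M : Matrix (Fin m) (Fin n) ℝ) (S : Finset (Fin n))
    (hIsU : IsUnit ((colsOf M S)ᵀ * colsOf M S).det) :
    (colsOf M S)ᵀ * residT M S = 0 := by
  unfold residT projT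
  rw [Matrix.mul_sub, Matrix.mul_one]
  rw [show (colsOf M S)ᵀ * (colsOf M S * ((colsOf M S)ᵀ * colsOf M S)⁻¹ * (colsOf M S)ᵀ)
      = ((colsOf M S)ᵀ * colsOf M S * ((colsOf M S)ᵀ * colsOf M S)⁻¹) * (colsOf M S)ᵀ by
        simp only [Matrix.mul_assoc]]
  rw [Matrix.mul_nonsing_inv _ hIsU, Matrix.one_mul, sub_self]

lemma gram_symm (M : Matrix (Fin m) (Fin n) ℝ) (S : Finset (Fin n)) :
    ((colsOf M S)ᵀ * colsOf M S)ᵀ = (colsOf M S)ᵀ * colsOf M S := by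
  rw [Matrix.transpose_mul, Matrix.transpose_transpose]

lemma resid_symm (M : Matrix (Fin m) (Fin n) ℝ) (S : Finset (Fin n)) :
    (residT M S)ᵀ = residT M S := by
  unfold residT projT
  rw [Matrix.transpose_sub, Matrix.transpose_one, Matrix.transpose_mul, Matrix.transpose_mul,
    Matrix.transpose_transpose, Matrix.transpose_nonsing_inv, gram_symm, Matrix.mul_assoc]

lemma proj_idem (M : Matrix (Fin m) (Fin n) ℝ) (S : Finset (Fin n))
    (hIsU : IsUnit ((colsOf M S)ᵀ * colsOf M S).det) :
    projT M S * projT M S = projT M S := by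
  unfold projT
  rw [show colsOf M S * ((colsOf M S)ᵀ * colsOf M S)⁻¹ * (colsOf M S)ᵀ *
      (colsOf M S * ((colsOf M S)ᵀ * colsOf M S)⁻¹ * (colsOf M S)ᵀ)
      = colsOf M S * ((((colsOf M S)ᵀ * colsOf M S)⁻¹ * ((colsOf M S)ᵀ * colsOf M S)) *
        (((colsOf M S)ᵀ * colsOf M S)⁻¹ * (colsOf M S)ᵀ)) by
        simp only [Matrix.mul_assoc]]
  rw [Matrix.nonsing_inv_mul _ hIsU, Matrix.one_mul]; simp only [Matrix.mul_assoc]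

lemma resid_idem (M : Matrix (Fin m) (Fin n) ℝ) (S : Finset (Fin n))
    (hIsU : IsUnit ((colsOf M S)ᵀ * colsOf M S).det) :
    residT M S * residT M S = residT M S := by
  unfold residT
  rw [Matrix.sub_mul, Matrix.mul_sub, Matrix.mul_sub, Matrix.one_mul, Matrix.mul_one,
    proj_idem M S hIsU]
  simp

lemma resid_dot_suppS (M : Matrix (Fin m) (Fin n) ℝ) (S : Finset (Fin n))
    (hIsU : IsUnit ((colsOf M S)ᵀ * colsOf M S).det)
    (w : Fin m → ℝ) (c : Fin n → ℝ) (hc : ∀ i ∉ S, c i = 0) :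
    (residT M S *ᵥ w) ⬝ᵥ (M *ᵥ c) = 0 := by
  rw [mulVec_restrict M S c hc, dotProduct_mulVec, ← mulVec_transpose,
    mulVec_mulVec, colsT_mul_resid M S hIsU, Matrix.zero_mulVec, zero_dotProduct]

end SAux

lemma scalar_key (δ P Qt γ Y : ℝ) (hδ0 : 0 < δ) (hδ1 : δ < 1)
    (hP : 0 ≤ P) (hγ : 0 ≤ γ)
    (hd : (1-δ)*Qt ≤ P)
    (ha : (1-δ)*γ ≤ Y) (hb : Y ≤ (1+δ)*γ)
    (h1 : P^2 ≤ (P-(1-δ)*Qt)*(Y-(1-δ)*γ))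
    (h2 : P^2 ≤ ((1+δ)*Qt-P)*((1+δ)*γ-Y)) :
    (1-δ)*Qt ≤ δ^2*Y := by
  have hY : 0 ≤ Y := le_trans (mul_nonneg (by linarith) hγ) ha
  rcases le_or_gt P 0 with hP0 | hP0
  · exact le_trans hd (le_trans hP0 (mul_nonneg (sq_nonneg δ) hY))
  refine le_trans hd ?_
  set a := Y - (1-δ)*γ with hadef
  set b := (1+δ)*γ - Y with hbdef
  set c := (1-δ)*γ + b with hcdef
  have ha0 : 0 ≤ a := by simp only [hadef]; linarith
  have hb0 : 0 ≤ b := by simp only [hbdef]; linarith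
  have hstar : P^2*(2*δ*c) ≤ 2*δ*a*b*P := by
    have e1 : (1-δ)*Qt*a ≤ P*a - P^2 := by nlinarith
    have e2 : P^2 + P*b ≤ (1+δ)*Qt*b := by nlinarith
    have e3 : (1-δ)*a*(P^2 + P*b) ≤ (1+δ)*b*((1-δ)*Qt*a) := by
      have h := mul_le_mul_of_nonneg_left e2 (by nlinarith : (0:ℝ) ≤ (1-δ)*a)
      calc (1-δ)*a*(P^2+P*b) ≤ (1-δ)*a*((1+δ)*Qt*b) := h
        _ = (1+δ)*b*((1-δ)*Qt*a) := by ring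
    have e4 : (1+δ)*b*((1-δ)*Qt*a) ≤ (1+δ)*b*(P*a - P^2) := by
      exact mul_le_mul_of_nonneg_left e1 (by nlinarith : (0:ℝ) ≤ (1+δ)*b)
    have e5 : (1-δ)*a*(P^2 + P*b) ≤ (1+δ)*b*(P*a - P^2) := le_trans e3 e4
    have hc : 2*δ*c = (1-δ)*a+(1+δ)*b := by
      simp only [hcdef, hbdef, hadef]; ring
    rw [hc]; nlinarith [e5]
  have hPc : P*c ≤ a*b := by
    nlinarith [hstar, mul_pos hδ0 hP0]
  have hiden : a*b ≤ δ^2*Y*c := by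
    have key : δ^2*Y*c - a*b = (1-δ^2)*(a-δ*γ)^2 := by
      simp only [hcdef, hbdef, hadef]; ring
    have h7 : (0:ℝ) ≤ (1-δ^2)*(a-δ*γ)^2 :=
      mul_nonneg (by nlinarith) (sq_nonneg _)
    linarith
  rcases lt_or_ge 0 c with hcpos | hz
  · have : P*c ≤ (δ^2*Y)*c := le_trans hPc hiden
    exact le_of_mul_le_mul_right this hcpos
  · exfalso
    have h6 : 0 ≤ (1-δ)*γ := mul_nonneg (by linarith) hγ
    have hγ0 : (1-δ)*γ = 0 := by rw [hcdef] at hz; linarith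
    have hb0' : b = 0 := by rw [hcdef] at hz; linarith
    have hγ0' : γ = 0 := by
      rcases mul_eq_zero.1 hγ0 with h | h
      · linarith
      · exact h
    have hY0 : Y = 0 := by rw [hbdef, hγ0'] at hb0'; linarith
    have ha0' : a = 0 := by rw [hadef, hγ0', hY0]; ring
    rw [ha0'] at h1
    nlinarith

set_option maxHeartbeats 2000000 in
theorem stmt7 {m n k : ℕ} (M : Matrix (Fin m) (Fin n) ℝ) (δ : ℝ)
    (hδ0 : 0 < δ) (hδ1 : δ < 1)
    (hunit : ∀ j : Fin n, (fun r => M r j) ⬝ᵥ (fun r => M r j) = 1)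
    (hRIP : RIP M (2 * k) δ)
    (x : Fin n → ℝ) (L : Finset (Fin n)) (hsupp : ∀ i, x i ≠ 0 ↔ i ∈ L)
    (hL : L.card = k) (y : Fin m → ℝ) (hy : y = M *ᵥ x)
    (T : Finset (Fin n)) (hT : T.card ≤ k)
    (ζ : ℕ) (hζ : ζ = (T \ L).card) (hζ1 : 1 ≤ ζ)
    (xt : Fin n → ℝ) (hxt : ∀ i, xt i = if i ∈ L \ T then x i else 0)
    (yt : Fin m → ℝ) (hyt : yt = M *ᵥ xt) :
    ∃ j ∈ T \ L,
      ((residT M (T.erase j) *ᵥ fun r => M r j) ⬝ᵥ y) ^ 2 /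
          ((residT M (T.erase j) *ᵥ fun r => M r j) ⬝ᵥ
            (residT M (T.erase j) *ᵥ fun r => M r j)) ≤
        (1 / (ζ : ℝ)) * (δ ^ 2 / (1 - δ)) * (yt ⬝ᵥ yt) := by
  classical
  have hjex : (T \ L).Nonempty := Finset.card_pos.mp (by omega)
  -- RIP instances
  have hRIPlow : ∀ (S : Finset (Fin n)), S.card ≤ 2*k → ∀ w : Fin n → ℝ,
      (∀ i ∉ S, w i = 0) → (1-δ) * (w ⬝ᵥ w) ≤ (M *ᵥ w) ⬝ᵥ (M *ᵥ w) :=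
    fun S hs w hw => (hRIP w ⟨S, hs, hw⟩).1
  have hRIPupp : ∀ (S : Finset (Fin n)), S.card ≤ 2*k → ∀ w : Fin n → ℝ,
      (∀ i ∉ S, w i = 0) → (M *ᵥ w) ⬝ᵥ (M *ᵥ w) ≤ (1+δ) * (w ⬝ᵥ w) :=
    fun S hs w hw => (hRIP w ⟨S, hs, hw⟩).2
  -- gram determinants
  have hpd : ∀ (S : Finset (Fin n)), S.card ≤ 2*k →
      IsUnit ((colsOf M S)ᵀ * colsOf M S).det := by
    intro S hS
    apply SAux.gram_isUnit
    intro v hv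
    rw [SAux.dot_gram, ← SAux.mulVec_extv]
    have hvv : 0 < v ⬝ᵥ v := by
      rcases (lt_or_eq_of_le (Finset.sum_nonneg fun i _ => mul_self_nonneg (v i))) with h | h
      · exact h
      · exact absurd (dotProduct_self_eq_zero.mp h.symm) hv
    calc (0:ℝ) < (1-δ) * (v ⬝ᵥ v) := mul_pos (by linarith) hvv
      _ = (1-δ) * (SAux.extv S v ⬝ᵥ SAux.extv S v) := by rw [SAux.dot_extv]
      _ ≤ _ := hRIPlow S hS _ (SAux.extv_support S v)
  have hTcard : T.card ≤ 2*k := by omega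
  have hUT : IsUnit ((colsOf M T)ᵀ * colsOf M T).det := hpd T hTcard
  -- least squares coefficients on T
  set β : {i // i ∈ T} → ℝ :=
    ((colsOf M T)ᵀ * colsOf M T)⁻¹ *ᵥ ((colsOf M T)ᵀ *ᵥ yt) with hβ
  set bb : Fin n → ℝ := SAux.extv T β with hbb
  clear_value β bb
  have hbbsupp : ∀ i ∉ T, bb i = 0 := by rw [hbb]; exact SAux.extv_support T β
  have hMbb : M *ᵥ bb = colsOf M T *ᵥ β := by rw [hbb]; exact SAux.mulVec_extv M T β
  have hnormal : (colsOf M T)ᵀ *ᵥ (M *ᵥ bb) = (colsOf M T)ᵀ *ᵥ yt := by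
    rw [hMbb, mulVec_mulVec, hβ, mulVec_mulVec,
      Matrix.mul_nonsing_inv _ hUT, Matrix.one_mulVec]
  have hF2 : ∀ w : Fin n → ℝ, (∀ i ∉ T, w i = 0) →
      (M *ᵥ w) ⬝ᵥ (yt - M *ᵥ bb) = 0 := by
    intro w hw
    rw [SAux.mulVec_restrict M T w hw, dotProduct_comm, dotProduct_mulVec,
      ← mulVec_transpose, Matrix.mulVec_sub, hnormal, sub_self, zero_dotProduct]
  -- scalar quantities
  set P : ℝ := (M *ᵥ bb) ⬝ᵥ (M *ᵥ bb) with hPdef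
  set Qt : ℝ := bb ⬝ᵥ bb with hQtdef
  set γv : ℝ := xt ⬝ᵥ xt with hγdef
  set Y : ℝ := yt ⬝ᵥ yt with hYdef
  clear_value P Qt γv Y
  have hPyt : (M *ᵥ bb) ⬝ᵥ yt = P := by
    have h0 := hF2 bb hbbsupp
    rw [dotProduct_sub] at h0
    rw [hPdef]; linarith
  have hxtsupp : ∀ i ∉ L \ T, xt i = 0 := by
    intro i hi; rw [hxt i, if_neg hi]
  have hbxt : bb ⬝ᵥ xt = 0 := by
    apply Finset.sum_eq_zero
    intro i _
    by_cases h : i ∈ T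
    · have : i ∉ L \ T := fun hc => (Finset.mem_sdiff.1 hc).2 h
      rw [hxtsupp i this, mul_zero]
    · rw [hbbsupp i h, zero_mul]
  -- support of combination
  have hUcard : (T ∪ (L \ T)).card ≤ 2*k := by
    have h1 := Finset.card_union_le T (L \ T)
    have h2 : (L \ T).card ≤ L.card := Finset.card_le_card (Finset.sdiff_subset)
    omega
  have hcombsupp : ∀ s t : ℝ, ∀ i ∉ T ∪ (L \ T), (s•bb + t•xt) i = 0 := by
    intro s t i hi
    rw [Finset.mem_union] at hi
    push_neg at hi
    have h1 := hbbsupp i hi.1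
    have h2 := hxtsupp i hi.2
    simp [h1, h2]
  have hMcomb : ∀ s t : ℝ, M *ᵥ (s•bb + t•xt) = s•(M *ᵥ bb) + t•yt := by
    intro s t
    rw [Matrix.mulVec_add, Matrix.mulVec_smul, Matrix.mulVec_smul, hyt]
  have hdotcomb : ∀ s t : ℝ, (s•bb + t•xt) ⬝ᵥ (s•bb + t•xt) = s^2*Qt + t^2*γv := by
    intro s t
    have hc := dotProduct_comm xt bb
    simp only [dotProduct_add, add_dotProduct, smul_dotProduct, dotProduct_smul,
      smul_eq_mul]
    rw [hbxt] at hc ⊢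
    rw [hc]
    simp only [hQtdef, hγdef]; ring
  have hMdotcomb : ∀ s t : ℝ,
      (s•(M *ᵥ bb) + t•yt) ⬝ᵥ (s•(M *ᵥ bb) + t•yt) = s^2*P + 2*s*t*P + t^2*Y := by
    intro s t
    have hc : yt ⬝ᵥ (M *ᵥ bb) = P := by rw [dotProduct_comm]; exact hPyt
    simp only [dotProduct_add, add_dotProduct, smul_dotProduct, dotProduct_smul,
      smul_eq_mul]
    linear_combination (s*t)*hPyt + (s*t)*hc + (s*s)*hPdef.symm + (t*t)*hYdef.symm
  have hlow : ∀ s t : ℝ, (1-δ)*(s^2*Qt + t^2*γv) ≤ s^2*P + 2*s*t*P + t^2*Y := by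
    intro s t
    have h0 := hRIPlow (T ∪ (L \ T)) hUcard (s•bb + t•xt) (hcombsupp s t)
    rwa [hdotcomb, hMcomb, hMdotcomb] at h0
  have hupp : ∀ s t : ℝ, s^2*P + 2*s*t*P + t^2*Y ≤ (1+δ)*(s^2*Qt + t^2*γv) := by
    intro s t
    have h0 := hRIPupp (T ∪ (L \ T)) hUcard (s•bb + t•xt) (hcombsupp s t)
    rwa [hdotcomb, hMcomb, hMdotcomb] at h0
  -- scalar facts
  have hPnn : 0 ≤ P := by
    rw [hPdef]; exact Finset.sum_nonneg fun i _ => mul_self_nonneg _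
  have hγnn : 0 ≤ γv := by
    rw [hγdef]; exact Finset.sum_nonneg fun i _ => mul_self_nonneg _
  have hYnn : 0 ≤ Y := by
    rw [hYdef]; exact Finset.sum_nonneg fun i _ => mul_self_nonneg _
  have hdle : (1-δ)*Qt ≤ P := by nlinarith [hlow 1 0]
  have hale : (1-δ)*γv ≤ Y := by nlinarith [hlow 0 1]
  have hble : Y ≤ (1+δ)*γv := by nlinarith [hupp 0 1]
  have h1 : P^2 ≤ (P-(1-δ)*Qt)*(Y-(1-δ)*γv) := by
    have hq : ∀ s : ℝ, 0 ≤ (P-(1-δ)*Qt)*(s*s) + (2*P)*s + (Y-(1-δ)*γv) := by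
      intro s
      have h := hlow s 1
      norm_num at h
      nlinarith [h]
    have hdis := discrim_le_zero hq
    rw [discrim] at hdis
    nlinarith [hdis]
  have h2 : P^2 ≤ ((1+δ)*Qt-P)*((1+δ)*γv-Y) := by
    have hq : ∀ s : ℝ, 0 ≤ ((1+δ)*Qt-P)*(s*s) + (2*P)*s + ((1+δ)*γv-Y) := by
      intro s
      have h := hupp s (-1)
      norm_num at h
      nlinarith [h]
    have hdis := discrim_le_zero hq
    rw [discrim] at hdis
    nlinarith [hdis]
  have hkey : (1-δ)*Qt ≤ δ^2*Y :=
    scalar_key δ P Qt γv Y hδ0 hδ1 hPnn hγnn hdle hale hble h1 h2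
  -- choose minimizing j
  obtain ⟨j, hjA, hjmin⟩ := Finset.exists_min_image (T \ L) (fun i => (bb i)^2) hjex
  have hjT : j ∈ T := (Finset.mem_sdiff.1 hjA).1
  have hjL : j ∉ L := (Finset.mem_sdiff.1 hjA).2
  have hζβ : (ζ : ℝ) * (bb j)^2 ≤ Qt := by
    have hs1 : (ζ : ℝ) * (bb j)^2 = ∑ i ∈ T \ L, (bb j)^2 := by
      rw [Finset.sum_const, hζ, nsmul_eq_mul]
    have hs2 : ∑ i ∈ T \ L, (bb j)^2 ≤ ∑ i ∈ T \ L, (bb i)^2 :=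
      Finset.sum_le_sum hjmin
    have hs3 : ∑ i ∈ T \ L, (bb i)^2 ≤ ∑ i : Fin n, (bb i)^2 :=
      Finset.sum_le_sum_of_subset_of_nonneg (Finset.subset_univ _)
        (fun i _ _ => sq_nonneg _)
    have hs4 : ∑ i : Fin n, (bb i)^2 = Qt := by
      rw [hQtdef]; apply Finset.sum_congr rfl; intro i _; rw [sq]
    linarith
  -- the chosen j works
  refine ⟨j, hjA, ?_⟩
  have hScard : (T.erase j).card ≤ 2*k :=
    le_trans (Finset.card_le_card (Finset.erase_subset j T)) hTcard
  have hUS : IsUnit ((colsOf M (T.erase j))ᵀ * colsOf M (T.erase j)).det :=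
    hpd _ hScard
  set S : Finset (Fin n) := T.erase j with hSdef
  set cj : Fin m → ℝ := fun r => M r j with hcj
  set u : Fin m → ℝ := residT M S *ᵥ cj with hu
  clear_value u
  -- (A) u ⬝ y = u ⬝ yt
  have hdiffsupp : ∀ i ∉ S, x i - xt i = 0 := by
    intro i hi
    rw [hxt i]
    by_cases hiL : i ∈ L
    · by_cases hiT : i ∈ T
      · have : i = j := by
          by_contra hne
          exact hi (Finset.mem_erase.2 ⟨hne, hiT⟩)
        exact absurd (this ▸ hiL) hjL
      · rw [if_pos (Finset.mem_sdiff.2 ⟨hiL, hiT⟩)]; ring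
    · have hx0 : x i = 0 := by
        by_contra hne; exact hiL ((hsupp i).1 hne)
      have : i ∉ L \ T := fun hc => hiL (Finset.mem_sdiff.1 hc).1
      rw [if_neg this, hx0]; ring
  have hA : u ⬝ᵥ y = u ⬝ᵥ yt := by
    have h0 : u ⬝ᵥ (M *ᵥ (x - xt)) = 0 := by
      rw [hu]; exact SAux.resid_dot_suppS M S hUS cj (x - xt) hdiffsupp
    rw [Matrix.mulVec_sub, dotProduct_sub] at h0
    rw [hy, hyt]
    linarith
  -- cj ⬝ u = u ⬝ u
  have hRu : residT M S *ᵥ u = u := by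
    rw [hu, mulVec_mulVec, SAux.resid_idem M S hUS]
  have hcju : cj ⬝ᵥ u = u ⬝ᵥ u := by
    have h0 : cj ⬝ᵥ u = (residT M S *ᵥ cj) ⬝ᵥ (residT M S *ᵥ cj) := by
      conv_lhs => rw [hu, ← SAux.resid_idem M S hUS, ← mulVec_mulVec]
      rw [dotProduct_mulVec, ← mulVec_transpose, SAux.resid_symm]
    rw [h0, ← hu]
  have huunn : 0 ≤ u ⬝ᵥ u := Finset.sum_nonneg fun i _ => mul_self_nonneg _
  have huu1 : u ⬝ᵥ u ≤ 1 := by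
    have hcs := Finset.sum_mul_sq_le_sq_mul_sq Finset.univ cj u
    have hc1 : ∑ r, (cj r)^2 = 1 := by
      have := hunit j
      rw [← this]
      apply Finset.sum_congr rfl; intro r _; rw [sq]
    have hc2 : ∑ r, cj r * u r = u ⬝ᵥ u := hcju
    have hc3 : ∑ r, (u r)^2 = u ⬝ᵥ u := by
      apply Finset.sum_congr rfl; intro r _; rw [sq]
    rw [hc1, hc2, hc3, one_mul] at hcs
    nlinarith
  -- (B) u ⬝ yt = bb j * (u ⬝ u)
  have hB : u ⬝ᵥ yt = bb j * (u ⬝ᵥ u) := by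
    set c : {i // i ∈ S} → ℝ :=
      ((colsOf M S)ᵀ * colsOf M S)⁻¹ *ᵥ ((colsOf M S)ᵀ *ᵥ cj) with hc
    set ej : Fin n → ℝ := fun i => if i = j then (1:ℝ) else 0 with hej
    set w : Fin n → ℝ := ej - SAux.extv S c with hw
    have hwsupp : ∀ i ∉ T, w i = 0 := by
      intro i hi
      have hij : i ≠ j := fun h => hi (h ▸ hjT)
      have hiS : i ∉ S := fun h => hi (Finset.mem_of_mem_erase h)
      simp [hw, hej, hij, SAux.extv_support S c i hiS]
    have hMej : M *ᵥ ej = cj := by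
      funext r
      show ∑ i, M r i * (if i = j then (1:ℝ) else 0) = cj r
      simp only [mul_ite, mul_one, mul_zero]
      rw [Finset.sum_ite_eq' Finset.univ j (fun i => M r i)]
      simp [hcj]
    have hMw : M *ᵥ w = u := by
      rw [hw, Matrix.mulVec_sub, hMej, SAux.mulVec_extv, hu]
      unfold residT projT
      rw [Matrix.sub_mulVec, Matrix.one_mulVec, hc, mulVec_mulVec, mulVec_mulVec]
    have hBu1 : u ⬝ᵥ (yt - M *ᵥ bb) = 0 := by rw [← hMw]; exact hF2 w hwsupp
    have hstep1 : u ⬝ᵥ yt = ((colsOf M T)ᵀ *ᵥ u) ⬝ᵥ β := by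
      rw [dotProduct_sub] at hBu1
      have h11 : u ⬝ᵥ yt = u ⬝ᵥ (M *ᵥ bb) := by linarith
      rw [h11, hMbb, dotProduct_mulVec, ← mulVec_transpose]
    have h9 : (colsOf M S)ᵀ *ᵥ u = 0 := by
      rw [hu, mulVec_mulVec, SAux.colsT_mul_resid M S hUS, Matrix.zero_mulVec]
    have hNTu : (colsOf M T)ᵀ *ᵥ u =
        fun i : {i // i ∈ T} => if (i:Fin n) = j then (u ⬝ᵥ u) else 0 := by
      funext i
      show ∑ r, (colsOf M T)ᵀ i r * u r = _
      by_cases hij : (i : Fin n) = j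
      · rw [if_pos hij]
        have h12 : ∑ r, (colsOf M T)ᵀ i r * u r = cj ⬝ᵥ u := by
          apply Finset.sum_congr rfl
          intro r _
          show M r (i : Fin n) * u r = cj r * u r
          rw [hij, hcj]
        rw [h12, hcju]
      · rw [if_neg hij]
        have hiS : (i : Fin n) ∈ S := Finset.mem_erase.2 ⟨hij, i.2⟩
        have h10 := congrFun h9 ⟨(i : Fin n), hiS⟩
        simpa [Matrix.mulVec, dotProduct, colsOf, Matrix.transpose] using h10
    rw [hstep1, hNTu]
    have hbbj : bb j = β ⟨j, hjT⟩ := by simp [hbb, SAux.extv, hjT]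
    rw [hbbj]
    show ∑ i : {i // i ∈ T}, (if (i:Fin n) = j then (u ⬝ᵥ u) else 0) * β i = _
    rw [Finset.sum_eq_single (⟨j, hjT⟩ : {i // i ∈ T})]
    · simp [mul_comm]
    · intro b _ hbne
      have hne2 : (b : Fin n) ≠ j := fun h => hbne (Subtype.ext h)
      simp [hne2]
    · intro h; exact absurd (Finset.mem_univ _) h
  -- final computation
  have hζpos : (0:ℝ) < (ζ:ℝ) := by
    have : (1:ℕ) ≤ ζ := hζ1
    exact_mod_cast Nat.lt_of_lt_of_le Nat.zero_lt_one this
  have hQtle : Qt ≤ δ^2/(1-δ) * Y := by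
    rw [div_mul_eq_mul_div, le_div_iff₀ (by linarith : (0:ℝ) < 1-δ)]
    nlinarith [hkey]
  have hRHSnn : 0 ≤ (1 / (ζ : ℝ)) * (δ ^ 2 / (1 - δ)) * Y := by
    apply mul_nonneg
    apply mul_nonneg
    · positivity
    · apply div_nonneg (sq_nonneg δ) (by linarith)
    · exact hYnn
  rw [hA, hB]
  rcases eq_or_lt_of_le huunn with huu0 | huu0
  · rw [← huu0]
    simpa using hRHSnn
  · have hne : u ⬝ᵥ u ≠ 0 := ne_of_gt huu0
    have hLHS : (bb j * (u ⬝ᵥ u))^2 / (u ⬝ᵥ u) = (bb j)^2 * (u ⬝ᵥ u) := by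
      field_simp
    rw [hLHS]
    have e1 : (bb j)^2 * (u ⬝ᵥ u) ≤ (bb j)^2 := by
      nlinarith [sq_nonneg (bb j)]
    have e2 : (bb j)^2 ≤ Qt / (ζ:ℝ) := by
      rw [le_div_iff₀ hζpos]; linarith [hζβ]
    have e3 : Qt / (ζ:ℝ) ≤ (δ^2/(1-δ) * Y) / (ζ:ℝ) :=
      div_le_div_of_nonneg_right hQtle hζpos.le
    have e4 : (δ^2/(1-δ) * Y) / (ζ:ℝ) = (1 / (ζ : ℝ)) * (δ ^ 2 / (1 - δ)) * Y := by
      ring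
    linarith [e1, e2, e3, e4.le]

end
end

section
/- Let M ∈ ℝ^{m×n} have unit-norm columns and satisfy the RIP of order 2k with constant δ ∈ (0,1). Let x ∈ ℝⁿ have support L with |L| = k, let y = Mx, and let T ⊆ {1,…,n} with |T| ≤ k and κ = |L∖T| ≥ 1. Then there exists an index i ∈ L∖T such that ‖R_{T∪{i}} y‖² ≤ (1 − c_δ/κ) ‖R_T y‖², where c_δ = (1−δ²)(1−δ); i.e., one greedy atom addition contracts the squared residual by the factor (1 − c_δ/κ). -/
/-!
Write `r = R_T y`. Since `R_T` annihilates the columns indexed by `T`, `r = R_T M v` where `v` is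
the part of `x` on `Ω = L \ T`, and `r = M (v - u)` for some `u` supported on `T`; as `v ⊥ u`, the
RIP of order `2k` gives `(1 - δ)‖v‖² ≤ ‖r‖²`. Since `‖r‖² = ⟨r, M v⟩ = ∑_{j ∈ Ω} v_j ⟨r, M_j⟩`,
Cauchy–Schwarz yields `(1 - δ)‖r‖² ≤ ∑_{j ∈ Ω} ⟨r, M_j⟩²`, so some `i ∈ Ω` has
`⟨r, M_i⟩² ≥ (1 - δ)‖r‖² / κ`. Comparing `y` with `P_T y + ⟨r, M_i⟩ M_i`, which lies in the span of
the columns in `T ∪ {i}`, shows `‖R_{T ∪ {i}} y‖² ≤ ‖r‖² - ⟨r, M_i⟩²` for a unit column `M_i`;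
finally `c_δ ≤ 1 - δ`.
-/

open Matrix

noncomputable section

open Function

section Support

variable {ι : Type*} {S : Finset ι}

lemma dotProduct_eq_sum_of_support_subset [Fintype ι] (a : ι → ℝ) {u : ι → ℝ}
    (hu : ∀ j ∉ S, u j = 0) :
    a ⬝ᵥ u = ∑ j ∈ S, a j * u j :=
  (Finset.sum_subset (Finset.subset_univ S) fun j _ hj => by rw [hu j hj, mul_zero]).symm

lemma dotProduct_eq_of_support_subset [Fintype ι] (a : ι → ℝ) {u : ι → ℝ}
    (hu : ∀ j ∉ S, u j = 0) :
    a ⬝ᵥ u = (fun j : S => a j) ⬝ᵥ (fun j : S => u j) := by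
  rw [dotProduct_eq_sum_of_support_subset a hu]
  exact (Finset.sum_coe_sort S fun j => a j * u j).symm

lemma extend_val_eq_zero (c : S → ℝ) {j : ι} (hj : j ∉ S) : extend Subtype.val c 0 j = 0 :=
  extend_apply' _ _ _ fun ⟨a, ha⟩ => hj (ha ▸ a.2)

lemma restrict_extend_val (c : S → ℝ) : (fun j : S => extend Subtype.val c 0 j) = c :=
  funext (Subtype.val_injective.extend_apply c 0)

end Support

section Residual

variable {m n : ℕ} {M : Matrix (Fin m) (Fin n) ℝ} {S : Finset (Fin n)}

lemma mulVec_eq_colsOf_mulVec {u : Fin n → ℝ} (hu : ∀ j ∉ S, u j = 0) :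
    M *ᵥ u = colsOf M S *ᵥ fun j : S => u j :=
  funext fun r => dotProduct_eq_of_support_subset (M r) hu

lemma dotProduct_mulVec_eq_sum_of_support_subset (r : Fin m → ℝ) {v : Fin n → ℝ}
    (hv : ∀ j ∉ S, v j = 0) : r ⬝ᵥ (M *ᵥ v) = ∑ j ∈ S, (r ⬝ᵥ Mᵀ j) * v j := by
  rw [dotProduct_mulVec, dotProduct_eq_sum_of_support_subset _ hv]
  rfl

lemma projT_mul_colsOf (hS : IsUnit ((colsOf M S)ᵀ * colsOf M S).det) :
    projT M S * colsOf M S = colsOf M S := by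
  rw [projT, Matrix.mul_assoc, Matrix.mul_assoc, nonsing_inv_mul _ hS, Matrix.mul_one]

lemma transpose_residT : (residT M S)ᵀ = residT M S := by
  simp [residT, projT, transpose_nonsing_inv, Matrix.mul_assoc]

lemma residT_mulVec_mulVec_of_support_subset (hS : IsUnit ((colsOf M S)ᵀ * colsOf M S).det)
    {u : Fin n → ℝ} (hu : ∀ j ∉ S, u j = 0) : residT M S *ᵥ (M *ᵥ u) = 0 := by
  rw [mulVec_eq_colsOf_mulVec hu, mulVec_mulVec, residT, Matrix.sub_mul, Matrix.one_mul,
    projT_mul_colsOf hS, sub_self, zero_mulVec]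

lemma residT_mulVec_dotProduct_mulVec (hS : IsUnit ((colsOf M S)ᵀ * colsOf M S).det)
    (y : Fin m → ℝ) {u : Fin n → ℝ} (hu : ∀ j ∉ S, u j = 0) :
    (residT M S *ᵥ y) ⬝ᵥ (M *ᵥ u) = 0 := by
  rw [dotProduct_comm, dotProduct_mulVec, ← mulVec_transpose, transpose_residT,
    residT_mulVec_mulVec_of_support_subset hS hu, zero_dotProduct]

lemma exists_projT_mulVec_eq_mulVec (a : Fin m → ℝ) :
    ∃ u : Fin n → ℝ, (∀ j ∉ S, u j = 0) ∧ projT M S *ᵥ a = M *ᵥ u := by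
  set c := (((colsOf M S)ᵀ * colsOf M S)⁻¹ * (colsOf M S)ᵀ) *ᵥ a
  refine ⟨extend Subtype.val c 0, fun j hj => extend_val_eq_zero c hj, ?_⟩
  rw [mulVec_eq_colsOf_mulVec fun j hj => extend_val_eq_zero c hj, restrict_extend_val,
    mulVec_mulVec, projT, Matrix.mul_assoc]

lemma residT_mulVec_dotProduct_self (hS : IsUnit ((colsOf M S)ᵀ * colsOf M S).det)
    (y : Fin m → ℝ) : (residT M S *ᵥ y) ⬝ᵥ (residT M S *ᵥ y) = (residT M S *ᵥ y) ⬝ᵥ y := by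
  obtain ⟨u, hu, hPu⟩ := exists_projT_mulVec_eq_mulVec (M := M) (S := S) y
  have hy : residT M S *ᵥ y + M *ᵥ u = y := by
    rw [← hPu, residT, sub_mulVec, one_mulVec, sub_add_cancel]
  calc _ = (residT M S *ᵥ y) ⬝ᵥ (residT M S *ᵥ y + M *ᵥ u) := by
        rw [dotProduct_add, residT_mulVec_dotProduct_mulVec hS y hu, add_zero]
    _ = _ := by rw [hy]

lemma residT_mulVec_dotProduct_self_le (hS : IsUnit ((colsOf M S)ᵀ * colsOf M S).det)
    (y : Fin m → ℝ) {u : Fin n → ℝ} (hu : ∀ j ∉ S, u j = 0) :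
    (residT M S *ᵥ y) ⬝ᵥ (residT M S *ᵥ y) ≤ (y - M *ᵥ u) ⬝ᵥ (y - M *ᵥ u) := by
  obtain ⟨u₀, hu₀, hPu₀⟩ := exists_projT_mulVec_eq_mulVec (M := M) (S := S) y
  set r := residT M S *ᵥ y
  set w := M *ᵥ (u₀ - u)
  have hdecomp : y - M *ᵥ u = r + w := by
    simp only [r, w, residT, sub_mulVec, one_mulVec, hPu₀, mulVec_sub]
    abel
  have horth : r ⬝ᵥ w = 0 :=
    residT_mulVec_dotProduct_mulVec hS y fun j hj => by simp [hu j hj, hu₀ j hj]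
  rw [hdecomp, add_dotProduct, dotProduct_add, dotProduct_add, horth, dotProduct_comm w r,
    horth]
  linarith [show 0 ≤ w ⬝ᵥ w by simpa using dotProduct_self_star_nonneg w]

lemma residT_insert_mulVec_dotProduct_self_le {i : Fin n} (hcol : Mᵀ i ⬝ᵥ Mᵀ i = 1)
    (hS : IsUnit ((colsOf M (insert i S))ᵀ * colsOf M (insert i S)).det) (y : Fin m → ℝ) :
    (residT M (insert i S) *ᵥ y) ⬝ᵥ (residT M (insert i S) *ᵥ y) ≤
      (residT M S *ᵥ y) ⬝ᵥ (residT M S *ᵥ y) - ((residT M S *ᵥ y) ⬝ᵥ Mᵀ i) ^ 2 := by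
  obtain ⟨u, hu, hPu⟩ := exists_projT_mulVec_eq_mulVec (M := M) (S := S) y
  set r := residT M S *ᵥ y
  set t := r ⬝ᵥ Mᵀ i
  have hsupp : ∀ j ∉ insert i S, (u + Pi.single i t : Fin n → ℝ) j = 0 := by
    intro j hj
    rw [Finset.mem_insert, not_or] at hj
    simp [hu j hj.2, Pi.single_eq_of_ne hj.1]
  have hres : y - M *ᵥ (u + Pi.single i t) = r - t • Mᵀ i := by
    have hsingle : M *ᵥ Pi.single i t = t • Mᵀ i := by
      ext; simp [mulVec_single, mul_comm]
    simp only [r, residT, sub_mulVec, one_mulVec, hPu, mulVec_add, hsingle]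
    abel
  refine (residT_mulVec_dotProduct_self_le hS y hsupp).trans_eq ?_
  rw [hres]
  simp only [dotProduct_sub, sub_dotProduct, dotProduct_smul, smul_dotProduct, smul_eq_mul,
    hcol, dotProduct_comm (Mᵀ i) r]
  ring

section RIP

variable {s : ℕ} {δ : ℝ}

lemma RIP.posDef_gram_s9 (hRIP : RIP M s δ) (hδ : δ < 1) (hS : S.card ≤ s) :
    ((colsOf M S)ᵀ * colsOf M S).PosDef := by
  rw [posDef_iff_dotProduct_mulVec]
  refine ⟨by simpa using isHermitian_conjTranspose_mul_self (colsOf M S), fun c hc => ?_⟩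
  set u := extend Subtype.val c 0
  have hu : ∀ j ∉ S, u j = 0 := fun j hj => extend_val_eq_zero c hj
  have hquad : c ⬝ᵥ ((colsOf M S)ᵀ * colsOf M S) *ᵥ c = (M *ᵥ u) ⬝ᵥ (M *ᵥ u) := by
    rw [mulVec_eq_colsOf_mulVec hu, restrict_extend_val, ← mulVec_mulVec, dotProduct_mulVec,
      vecMul_transpose]
  have hnorm : u ⬝ᵥ u = c ⬝ᵥ c := by
    rw [dotProduct_eq_of_support_subset u hu, restrict_extend_val]
  have hpos : 0 < c ⬝ᵥ c := by simpa using dotProduct_self_star_pos_iff.mpr hc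
  have hlower := (hRIP u ⟨S, hS, hu⟩).1
  rw [star_trivial, hquad]
  nlinarith

lemma RIP.isUnit_det_gram (hRIP : RIP M s δ) (hδ : δ < 1) (hS : S.card ≤ s) :
    IsUnit ((colsOf M S)ᵀ * colsOf M S).det :=
  (hRIP.posDef_gram_s9 hδ hS).det_pos.ne'.isUnit

variable {T Ω : Finset (Fin n)} {v : Fin n → ℝ}

lemma RIP.one_sub_mul_dotProduct_le_residT (hRIP : RIP M s δ) (hδ : δ < 1)
    (hcard : (T ∪ Ω).card ≤ s) (hvT : ∀ j ∈ T, v j = 0) (hvΩ : ∀ j ∉ Ω, v j = 0) :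
    (1 - δ) * (v ⬝ᵥ v) ≤ (residT M T *ᵥ (M *ᵥ v)) ⬝ᵥ (residT M T *ᵥ (M *ᵥ v)) := by
  obtain ⟨u, hu, hPu⟩ := exists_projT_mulVec_eq_mulVec (M := M) (S := T) (M *ᵥ v)
  have hres : residT M T *ᵥ (M *ᵥ v) = M *ᵥ (v - u) := by
    rw [residT, sub_mulVec, one_mulVec, hPu, mulVec_sub]
  have hsupp : ∀ j ∉ T ∪ Ω, (v - u) j = 0 := by
    intro j hj
    rw [Finset.mem_union, not_or] at hj
    simp [hu j hj.1, hvΩ j hj.2]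
  have horth : v ⬝ᵥ u = 0 :=
    Finset.sum_eq_zero fun j _ => by by_cases hj : j ∈ T <;> simp [hvT, hu, hj]
  have hlower := (hRIP (v - u) ⟨T ∪ Ω, hcard, hsupp⟩).1
  rw [hres]
  have hnorm : (v - u) ⬝ᵥ (v - u) = v ⬝ᵥ v + u ⬝ᵥ u := by
    rw [sub_dotProduct, dotProduct_sub, dotProduct_sub, horth, dotProduct_comm u v, horth]
    ring
  nlinarith [show 0 ≤ u ⬝ᵥ u by simpa using dotProduct_self_star_nonneg u]

lemma RIP.one_sub_mul_residT_le_sum_sq (hRIP : RIP M s δ) (hδ : δ < 1)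
    (hcard : (T ∪ Ω).card ≤ s) (hvT : ∀ j ∈ T, v j = 0) (hvΩ : ∀ j ∉ Ω, v j = 0) :
    (1 - δ) * ((residT M T *ᵥ (M *ᵥ v)) ⬝ᵥ (residT M T *ᵥ (M *ᵥ v))) ≤
      ∑ j ∈ Ω, ((residT M T *ᵥ (M *ᵥ v)) ⬝ᵥ Mᵀ j) ^ 2 := by
  set r := residT M T *ᵥ (M *ᵥ v)
  have hT : IsUnit ((colsOf M T)ᵀ * colsOf M T).det :=
    hRIP.isUnit_det_gram hδ ((Finset.card_le_card Finset.subset_union_left).trans hcard)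
  have hcs : (r ⬝ᵥ r) ^ 2 ≤ (v ⬝ᵥ v) * ∑ j ∈ Ω, (r ⬝ᵥ Mᵀ j) ^ 2 := by
    rw [residT_mulVec_dotProduct_self hT, dotProduct_mulVec_eq_sum_of_support_subset r hvΩ,
      dotProduct_eq_sum_of_support_subset v hvΩ, mul_comm]
    simpa only [mul_comm, ← sq] using Finset.sum_mul_sq_le_sq_mul_sq Ω (fun j => r ⬝ᵥ Mᵀ j) v
  have hlower := hRIP.one_sub_mul_dotProduct_le_residT hδ hcard hvT hvΩ
  have hr : 0 ≤ r ⬝ᵥ r := by simpa using dotProduct_self_star_nonneg r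
  have hsum : 0 ≤ ∑ j ∈ Ω, (r ⬝ᵥ Mᵀ j) ^ 2 := Finset.sum_nonneg fun j _ => sq_nonneg _
  rcases hr.eq_or_lt with hr0 | hr0
  · rw [← hr0, mul_zero]
    exact hsum
  · nlinarith

end RIP

end Residual

theorem stmt9_general {m n k : ℕ} (M : Matrix (Fin m) (Fin n) ℝ) (δ : ℝ)
    (hδ1 : δ < 1)
    (hunit : ∀ j : Fin n, (fun r => M r j) ⬝ᵥ (fun r => M r j) = 1)
    (hRIP : RIP M (2 * k) δ)
    (x : Fin n → ℝ) (L : Finset (Fin n)) (hsupp : ∀ i, x i ≠ 0 ↔ i ∈ L)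
    (hL : L.card = k) (y : Fin m → ℝ) (hy : y = M *ᵥ x)
    (T : Finset (Fin n)) (hT : T.card ≤ k)
    (κ : ℕ) (hκ : κ = (L \ T).card) (hκ1 : 1 ≤ κ) :
    ∃ i ∈ L \ T,
      (residT M (insert i T) *ᵥ y) ⬝ᵥ (residT M (insert i T) *ᵥ y) ≤
        (1 - (1 - δ ^ 2) * (1 - δ) / (κ : ℝ)) *
          ((residT M T *ᵥ y) ⬝ᵥ (residT M T *ᵥ y)) := by
  have hκL : κ ≤ k := hκ ▸ hL ▸ Finset.card_le_card Finset.sdiff_subset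
  set v : Fin n → ℝ := fun j => if j ∈ T then 0 else x j
  have hvT : ∀ j ∈ T, v j = 0 := fun j hj => if_pos hj
  have hvΩ : ∀ j ∉ L \ T, v j = 0 := fun j hj => by
    by_cases hjT : j ∈ T
    · exact if_pos hjT
    · simp only [v, if_neg hjT]
      by_contra hxj
      exact hj (Finset.mem_sdiff.2 ⟨(hsupp j).1 hxj, hjT⟩)
  have hres : residT M T *ᵥ y = residT M T *ᵥ (M *ᵥ v) := by
    have hxv : ∀ j ∉ T, (x - v) j = 0 := fun j hj => by simp [v, hj]
    rw [hy, ← add_sub_cancel v x, mulVec_add, mulVec_add,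
      residT_mulVec_mulVec_of_support_subset (hRIP.isUnit_det_gram hδ1 (by omega)) hxv, add_zero]
  have hsum := hRIP.one_sub_mul_residT_le_sum_sq hδ1
    ((Finset.card_union_le T (L \ T)).trans (by omega)) hvT hvΩ
  rw [← hres] at hsum
  set r := residT M T *ᵥ y
  obtain ⟨i, hi, hcorr⟩ : ∃ i ∈ L \ T, (1 - δ) * (r ⬝ᵥ r) / κ ≤ (r ⬝ᵥ Mᵀ i) ^ 2 := by
    refine Finset.exists_le_of_sum_le (Finset.card_pos.1 (by omega)) ?_
    rwa [Finset.sum_const, nsmul_eq_mul, ← hκ, mul_div_cancel₀ _ (by positivity)]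
  refine ⟨i, hi, ?_⟩
  have hstep := residT_insert_mulVec_dotProduct_self_le (hunit i)
    (hRIP.isUnit_det_gram hδ1 ((Finset.card_insert_le i T).trans (by omega))) y
  have hr : 0 ≤ r ⬝ᵥ r := by simpa using dotProduct_self_star_nonneg r
  have hc : (1 - δ ^ 2) * (1 - δ) / κ * (r ⬝ᵥ r) ≤ (1 - δ) * (r ⬝ᵥ r) / κ := by
    rw [div_mul_eq_mul_div]
    gcongr
    nlinarith [mul_nonneg (mul_nonneg (sq_nonneg δ) (sub_nonneg.2 hδ1.le)) hr]
  linarith [show (1 - (1 - δ ^ 2) * (1 - δ) / κ) * (r ⬝ᵥ r)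
    = r ⬝ᵥ r - (1 - δ ^ 2) * (1 - δ) / κ * (r ⬝ᵥ r) by ring]

theorem stmt9 {m n k : ℕ} (M : Matrix (Fin m) (Fin n) ℝ) (δ : ℝ)
    (hδ0 : 0 < δ) (hδ1 : δ < 1)
    (hunit : ∀ j : Fin n, (fun r => M r j) ⬝ᵥ (fun r => M r j) = 1)
    (hRIP : RIP M (2 * k) δ)
    (x : Fin n → ℝ) (L : Finset (Fin n)) (hsupp : ∀ i, x i ≠ 0 ↔ i ∈ L)
    (hL : L.card = k) (y : Fin m → ℝ) (hy : y = M *ᵥ x)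
    (T : Finset (Fin n)) (hT : T.card ≤ k)
    (κ : ℕ) (hκ : κ = (L \ T).card) (hκ1 : 1 ≤ κ) :
    ∃ i ∈ L \ T,
      (residT M (insert i T) *ᵥ y) ⬝ᵥ (residT M (insert i T) *ᵥ y) ≤
        (1 - (1 - δ ^ 2) * (1 - δ) / (κ : ℝ)) *
          ((residT M T *ᵥ y) ⬝ᵥ (residT M T *ᵥ y)) :=
  stmt9_general M δ hδ1 hunit hRIP x L hsupp hL y hy T hT κ hκ hκ1

end
end

section
/- Let M ∈ ℝ^{m×n} have unit-norm columns and satisfy the RIP of order 2k with constant δ, 0 < δ < 0.445. Let x ∈ ℝⁿ have support L with |L| = k, let y = Mx, and let T ⊆ {1,…,n} with |T| = k and T ≠ L. Then there exist indices i ∈ L∖T and j ∈ T∖L such that ‖R_{(T∪{i})∖{j}} y‖² ≤ (1 − γ/k) ‖R_T y‖², where γ = c_δ − δ²/c_δ > 0 and c_δ = (1−δ²)(1−δ); i.e., one replacement step contracts the squared residual by the factor (1 − γ/k). -/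
open Matrix

noncomputable section

namespace StmtAux

variable {m n : ℕ}

/-- extension by zero of a coefficient vector on a subset -/
def extW (W : Finset (Fin n)) (c : {i // i ∈ W} → ℝ) : Fin n → ℝ :=
  fun i => if h : i ∈ W then c ⟨i, h⟩ else 0

lemma extW_notMem {W : Finset (Fin n)} (c : {i // i ∈ W} → ℝ) {i : Fin n} (hi : i ∉ W) :
    extW W c i = 0 := dif_neg hi

lemma extW_mem {W : Finset (Fin n)} (c : {i // i ∈ W} → ℝ) {i : Fin n} (hi : i ∈ W) :
    extW W c i = c ⟨i, hi⟩ := dif_pos hi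

lemma sum_of_support (s : Finset (Fin n)) (f : Fin n → ℝ) (h : ∀ i ∉ s, f i = 0) :
    ∑ i, f i = ∑ i ∈ s, f i :=
  (Finset.sum_subset (Finset.subset_univ s) (fun i _ hi => h i hi)).symm

lemma dot_self_nonneg {ι : Type*} [Fintype ι] (v : ι → ℝ) : 0 ≤ v ⬝ᵥ v :=
  Finset.sum_nonneg fun i _ => mul_self_nonneg _

lemma mulVec_extW (M : Matrix (Fin m) (Fin n) ℝ) (W : Finset (Fin n)) (c : {i // i ∈ W} → ℝ) :
    M *ᵥ extW W c = colsOf M W *ᵥ c := by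
  funext r
  have h2 : (colsOf M W *ᵥ c) r = ∑ j ∈ W.attach, M r j.1 * c j := by
    simp [mulVec, dotProduct, colsOf, Finset.univ_eq_attach, submatrix]
  have h1 : (M *ᵥ extW W c) r = ∑ i, M r i * extW W c i := rfl
  rw [h1, h2, sum_of_support W (fun i => M r i * extW W c i)
      (fun i hi => by simp [extW_notMem _ hi]),
    ← Finset.sum_attach W (fun i => M r i * extW W c i)]
  exact Finset.sum_congr rfl fun j _ => by rw [extW_mem c j.2]

lemma extW_dot_self (W : Finset (Fin n)) (c : {i // i ∈ W} → ℝ) :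
    extW W c ⬝ᵥ extW W c = c ⬝ᵥ c := by
  have h1 : extW W c ⬝ᵥ extW W c = ∑ i, extW W c i * extW W c i := rfl
  have h2 : c ⬝ᵥ c = ∑ j ∈ W.attach, c j * c j := by
    simp [dotProduct, Finset.univ_eq_attach]
  rw [h1, h2, sum_of_support W (fun i => extW W c i * extW W c i)
      (fun i hi => by simp [extW_notMem _ hi]),
    ← Finset.sum_attach W (fun i => extW W c i * extW W c i)]
  exact Finset.sum_congr rfl fun j _ => by rw [extW_mem c j.2]

lemma gram_det_isUnit {s : ℕ} {δ : ℝ} (M : Matrix (Fin m) (Fin n) ℝ)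
    (hδ : δ < 1) (h : RIP M s δ) (W : Finset (Fin n)) (hW : W.card ≤ s) :
    IsUnit ((colsOf M W)ᵀ * colsOf M W).det := by
  rw [isUnit_iff_ne_zero]
  intro hdet
  obtain ⟨c, hc0, hc⟩ := Matrix.exists_mulVec_eq_zero_iff.2 hdet
  have hsupp : ∀ i ∉ W, extW W c i = 0 := fun i hi => extW_notMem c hi
  have hrip := (h (extW W c) ⟨W, hW, hsupp⟩).1
  rw [mulVec_extW, extW_dot_self] at hrip
  have hzero : (colsOf M W *ᵥ c) ⬝ᵥ (colsOf M W *ᵥ c) = 0 := by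
    have h1 : c ⬝ᵥ (((colsOf M W)ᵀ * colsOf M W) *ᵥ c)
        = (colsOf M W *ᵥ c) ⬝ᵥ (colsOf M W *ᵥ c) := by
      rw [← mulVec_mulVec, dotProduct_mulVec, vecMul_transpose]
    rw [← h1, hc, dotProduct_zero]
  have hpos : 0 < c ⬝ᵥ c := by
    rcases lt_or_eq_of_le (dot_self_nonneg c) with h' | h'
    · exact h'
    · exact absurd (dotProduct_self_eq_zero.1 h'.symm) hc0
  rw [hzero] at hrip
  nlinarith

lemma resid_eq_sub (M : Matrix (Fin m) (Fin n) ℝ) (W : Finset (Fin n)) (y : Fin m → ℝ) :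
    residT M W *ᵥ y =
      y - colsOf M W *ᵥ ((((colsOf M W)ᵀ * colsOf M W)⁻¹) *ᵥ ((colsOf M W)ᵀ *ᵥ y)) := by
  unfold residT projT
  rw [sub_mulVec, one_mulVec, mulVec_mulVec, mulVec_mulVec]

lemma colsT_mulVec_resid (M : Matrix (Fin m) (Fin n) ℝ) {W : Finset (Fin n)}
    (hinv : IsUnit ((colsOf M W)ᵀ * colsOf M W).det) (y : Fin m → ℝ) :
    (colsOf M W)ᵀ *ᵥ (residT M W *ᵥ y) = 0 := by
  rw [resid_eq_sub, mulVec_sub, mulVec_mulVec, mulVec_mulVec,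
    Matrix.mul_nonsing_inv _ hinv, one_mulVec, sub_self]

lemma col_dot_resid (M : Matrix (Fin m) (Fin n) ℝ) {W : Finset (Fin n)}
    (hinv : IsUnit ((colsOf M W)ᵀ * colsOf M W).det) (y : Fin m → ℝ)
    {j : Fin n} (hj : j ∈ W) :
    (fun r => M r j) ⬝ᵥ (residT M W *ᵥ y) = 0 := by
  have h := congrFun (colsT_mulVec_resid M hinv y) ⟨j, hj⟩
  simpa [mulVec, dotProduct, colsOf, transpose_apply, submatrix] using h

lemma resid_min (M : Matrix (Fin m) (Fin n) ℝ) {W : Finset (Fin n)}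
    (hinv : IsUnit ((colsOf M W)ᵀ * colsOf M W).det) (y : Fin m → ℝ)
    (u : Fin n → ℝ) (hu : ∀ i ∉ W, u i = 0) :
    (residT M W *ᵥ y) ⬝ᵥ (residT M W *ᵥ y) ≤ (y - M *ᵥ u) ⬝ᵥ (y - M *ᵥ u) := by
  set r := residT M W *ᵥ y with hr
  set wv := (((colsOf M W)ᵀ * colsOf M W)⁻¹) *ᵥ ((colsOf M W)ᵀ *ᵥ y) with hwv
  set d : {i // i ∈ W} → ℝ := wv - (fun j => u j.1) with hd
  have hMu : M *ᵥ u = colsOf M W *ᵥ (fun j => u j.1) := by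
    have hue : u = extW W (fun j => u j.1) := by
      funext i
      by_cases h : i ∈ W
      · rw [extW_mem _ h]
      · rw [extW_notMem _ h, hu i h]
    calc M *ᵥ u = M *ᵥ extW W (fun j => u j.1) := by rw [← hue]
      _ = colsOf M W *ᵥ (fun j => u j.1) := mulVec_extW M W _
  have hy_r : y - M *ᵥ u = r + colsOf M W *ᵥ d := by
    rw [hd, mulVec_sub, hMu, hr, resid_eq_sub, ← hwv]
    abel
  rw [hy_r]
  have hortho : r ⬝ᵥ (colsOf M W *ᵥ d) = 0 := by
    rw [dotProduct_mulVec, ← mulVec_transpose, hr, colsT_mulVec_resid M hinv y,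
      zero_dotProduct]
  have hnn : 0 ≤ (colsOf M W *ᵥ d) ⬝ᵥ (colsOf M W *ᵥ d) := dot_self_nonneg _
  have hexp : (r + colsOf M W *ᵥ d) ⬝ᵥ (r + colsOf M W *ᵥ d)
      = r ⬝ᵥ r + 2 * (r ⬝ᵥ (colsOf M W *ᵥ d)) + (colsOf M W *ᵥ d) ⬝ᵥ (colsOf M W *ᵥ d) := by
    rw [dotProduct_add, add_dotProduct, add_dotProduct, dotProduct_comm (colsOf M W *ᵥ d) r]
    ring
  rw [hexp, hortho]
  linarith

lemma dot_expand {p : ℕ} (a b : Fin p → ℝ) (t : ℝ) :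
    (a + t • b) ⬝ᵥ (a + t • b)
      = a ⬝ᵥ a + t * (a ⬝ᵥ b) + t * (b ⬝ᵥ a) + t ^ 2 * (b ⬝ᵥ b) := by
  rw [dotProduct_add, add_dotProduct, add_dotProduct, dotProduct_smul, smul_dotProduct,
    smul_dotProduct, dotProduct_smul]
  simp only [smul_eq_mul]
  ring

lemma mulVec_single_one (M : Matrix (Fin m) (Fin n) ℝ) (j : Fin n) :
    M *ᵥ Pi.single j (1:ℝ) = fun r0 => M r0 j := by
  funext r0
  simp [mulVec, dotProduct, Pi.single_apply, mul_ite, Finset.sum_ite_eq']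


lemma step1'_lemma {δ q ρ R U : ℝ} (hq : 0 < q) (h1 : ρ ≤ R - U) (h2 : (1 - δ) * R ≤ q * U) :
    q * ρ ≤ (q - (1 - δ)) * R := by nlinarith

lemma chain_lemma {δ t Nv Z' : ℝ} (ht : 0 < t) (hNv : 0 ≤ Nv) (hZ : 0 < Z') (hδ0 : 0 < δ)
    (h : (1 - δ) * (Z' + 2 * t * Nv + t ^ 2 * Nv) ≤ (1 + δ) * (Z' - 2 * t * Nv + t ^ 2 * Nv))
    (h2 : t ^ 2 * Nv = Z') :
    Nv ≤ δ ^ 2 * Z' := by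
  have h5 : t * Nv ≤ δ * Z' := by nlinarith
  have h61 : (t * Nv) ^ 2 ≤ (δ * Z') ^ 2 :=
    pow_le_pow_left₀ (mul_nonneg ht.le hNv) h5 2
  nlinarith [h61, h2, hZ]

lemma assemble_lemma {δ γ q k R ρ Z' Nv w F : ℝ}
    (hδ0 : 0 < δ) (ha : 0 < 1 - δ)
    (hq1 : 1 ≤ q) (hqk : q ≤ k)
    (hR : 0 ≤ R) (hρ : 0 ≤ ρ)
    (hγpos : 0 < γ) (hkey : γ * (1 - δ) ≤ (1 - δ) ^ 2 - δ ^ 2)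
    (hF : F ≤ ρ + w)
    (hw : q * w ≤ Nv)
    (hNv : Nv ≤ δ ^ 2 * Z')
    (hZ : (1 - δ) * Z' ≤ ρ)
    (hstep : q * ρ ≤ (q - (1 - δ)) * R) :
    F ≤ (1 - γ / k) * R := by
  have hq0 : 0 < q := lt_of_lt_of_le one_pos hq1
  have hk0 : 0 < k := lt_of_lt_of_le hq0 hqk
  have h8 : q * F ≤ q * ρ + δ ^ 2 * Z' := by nlinarith [mul_le_mul_of_nonneg_left hF hq0.le]
  have h9 : (1 - δ) * (q * F) ≤ ((1 - δ) * q + δ ^ 2) * ρ := by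
    nlinarith [mul_le_mul_of_nonneg_left h8 ha.le,
      mul_le_mul_of_nonneg_left hZ (sq_nonneg δ)]
  have hpos : (0:ℝ) ≤ (1 - δ) * q + δ ^ 2 := by positivity
  have h10 : (1 - δ) * q ^ 2 * F ≤ ((1 - δ) * q + δ ^ 2) * ((q - (1 - δ)) * R) := by
    nlinarith [mul_le_mul_of_nonneg_left h9 hq0.le, mul_le_mul_of_nonneg_left hstep hpos]
  have hscal : ((1 - δ) * q + δ ^ 2) * (q - (1 - δ)) ≤ (1 - δ) * q ^ 2 - (1 - δ) * q * γ := by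
    have hbr : 0 ≤ (1 - δ) ^ 2 - δ ^ 2 - γ * (1 - δ) := by linarith
    nlinarith [mul_nonneg hq0.le hbr, mul_nonneg (mul_nonneg hδ0.le hδ0.le) ha.le]
  have h11 : (1 - δ) * q ^ 2 * F ≤ ((1 - δ) * q ^ 2 - (1 - δ) * q * γ) * R := by
    have := mul_le_mul_of_nonneg_right hscal hR
    calc (1 - δ) * q ^ 2 * F ≤ ((1 - δ) * q + δ ^ 2) * ((q - (1 - δ)) * R) := h10
      _ = ((1 - δ) * q + δ ^ 2) * (q - (1 - δ)) * R := by ring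
      _ ≤ ((1 - δ) * q ^ 2 - (1 - δ) * q * γ) * R := this
  have h12 : F ≤ (1 - γ / q) * R := by
    have hqne : q ≠ 0 := ne_of_gt hq0
    have heq : ((1 - δ) * q ^ 2 - (1 - δ) * q * γ) * R
        = (1 - δ) * q ^ 2 * ((1 - γ / q) * R) := by
      field_simp
    rw [heq] at h11
    have hpos2 : (0:ℝ) < (1 - δ) * q ^ 2 := by positivity
    exact le_of_mul_le_mul_left h11 hpos2
  have h13 : (1 - γ / q) * R ≤ (1 - γ / k) * R := by
    apply mul_le_mul_of_nonneg_right _ hR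
    have : γ / k ≤ γ / q := div_le_div_of_nonneg_left hγpos.le hq0 hqk
    linarith
  exact le_trans h12 h13

end StmtAux

set_option maxHeartbeats 2000000 in
theorem stmt10 {m n k : ℕ} (M : Matrix (Fin m) (Fin n) ℝ) (δ : ℝ)
    (hδ0 : 0 < δ) (hδ1 : δ < 0.445)
    (hunit : ∀ j : Fin n, (fun r => M r j) ⬝ᵥ (fun r => M r j) = 1)
    (hRIP : RIP M (2 * k) δ)
    (x : Fin n → ℝ) (L : Finset (Fin n)) (hsupp : ∀ i, x i ≠ 0 ↔ i ∈ L)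
    (hL : L.card = k) (y : Fin m → ℝ) (hy : y = M *ᵥ x)
    (T : Finset (Fin n)) (hT : T.card = k) (hTL : T ≠ L)
    (cδ γ : ℝ) (hcδ : cδ = (1 - δ ^ 2) * (1 - δ)) (hγ : γ = cδ - δ ^ 2 / cδ) :
    0 < γ ∧
      ∃ i ∈ L \ T, ∃ j ∈ T \ L,
        (residT M ((insert i T).erase j) *ᵥ y) ⬝ᵥ
            (residT M ((insert i T).erase j) *ᵥ y) ≤
          (1 - γ / (k : ℝ)) * ((residT M T *ᵥ y) ⬝ᵥ (residT M T *ᵥ y)) := by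
  classical
  subst hy
  open StmtAux in
  -- scalar preliminaries
  have hδ445 : δ < 89 / 200 := by
    rw [show (0.445 : ℝ) = 89 / 200 by norm_num] at hδ1
    exact hδ1
  have hδlt1 : δ < 1 := by linarith
  have ha : (0:ℝ) < 1 - δ := by linarith
  have hc_pos : 0 < cδ := by rw [hcδ]; nlinarith
  have hcδ_le : cδ ≤ 1 - δ := by rw [hcδ]; nlinarith [sq_nonneg δ]
  have hcδ_gt : δ < cδ := by
    rw [hcδ]
    nlinarith [sq_nonneg δ, sq_nonneg (δ - 89/200), mul_pos hδ0 hδ0,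
      mul_nonneg (sub_nonneg.2 hδ445.le) (sq_nonneg δ), mul_nonneg hδ0.le hδ0.le]
  have hγ_pos : 0 < γ := by
    rw [hγ]
    have h1 : δ ^ 2 / cδ < cδ := by
      rw [div_lt_iff₀ hc_pos]
      nlinarith [hcδ_gt, hδ0]
    linarith
  have hγle : γ ≤ (1 - δ) - δ ^ 2 / (1 - δ) := by
    have hdiv : δ ^ 2 / (1 - δ) ≤ δ ^ 2 / cδ :=
      div_le_div_of_nonneg_left (sq_nonneg δ) hc_pos hcδ_le
    rw [hγ]; linarith
  have hkey : γ * (1 - δ) ≤ (1 - δ) ^ 2 - δ ^ 2 := by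
    have h2 := mul_le_mul_of_nonneg_right hγle ha.le
    have h3 : ((1 - δ) - δ ^ 2 / (1 - δ)) * (1 - δ) = (1 - δ) ^ 2 - δ ^ 2 := by
      field_simp
    linarith
  -- set-theoretic preliminaries
  have hLT_ne : (L \ T).Nonempty := by
    rw [Finset.sdiff_nonempty]
    intro hsub
    exact hTL (Finset.eq_of_subset_of_card_le hsub (by rw [hL, hT])).symm
  have hq_eq : (L \ T).card = (T \ L).card := by
    have h1 := Finset.card_sdiff_add_card_inter L T
    have h2 := Finset.card_sdiff_add_card_inter T L
    rw [Finset.inter_comm] at h2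
    omega
  set q := (L \ T).card with hqdef
  have hq1 : 1 ≤ q := Finset.card_pos.2 hLT_ne
  have hqk : q ≤ k := by
    have := Finset.card_le_card (Finset.sdiff_subset (s := L) (t := T))
    omega
  have hk1 : 1 ≤ k := le_trans hq1 hqk
  have hTL_ne : (T \ L).Nonempty := Finset.card_pos.1 (by omega)
  have hq1' : (1:ℝ) ≤ (q:ℝ) := by exact_mod_cast hq1
  have hq0' : (0:ℝ) < (q:ℝ) := by linarith
  have hqk' : (q:ℝ) ≤ (k:ℝ) := by exact_mod_cast hqk
  set C := L ∪ T with hCdef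
  have hC_card : C.card ≤ 2 * k := by
    have h1 : C = L ∪ (T \ L) := (Finset.union_sdiff_self_eq_union).symm
    have h2 : (T \ L).card ≤ k := by omega
    rw [h1, Finset.card_union_of_disjoint Finset.disjoint_sdiff]
    omega
  have hx0 : ∀ i ∉ L, x i = 0 := by
    intro i hi
    by_contra h
    exact hi ((hsupp i).1 h)
  -- the T-residual
  have hinvT : IsUnit ((colsOf M T)ᵀ * colsOf M T).det :=
    gram_det_isUnit M hδlt1 hRIP T (by omega)
  set y := M *ᵥ x with hydef
  set r := residT M T *ᵥ y with hrdef
  set R := r ⬝ᵥ r with hRdef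
  have hR_nonneg : 0 ≤ R := dot_self_nonneg r
  set wT := (((colsOf M T)ᵀ * colsOf M T)⁻¹) *ᵥ ((colsOf M T)ᵀ *ᵥ y) with hwTdef
  set z : Fin n → ℝ := x - extW T wT with hzdef
  have hz_supp : ∀ i ∉ C, z i = 0 := by
    intro i hi
    rw [hCdef, Finset.mem_union] at hi
    push_neg at hi
    simp [hzdef, hx0 i hi.1, extW_notMem _ hi.2]
  have hMz : M *ᵥ z = r := by
    rw [hzdef, mulVec_sub, mulVec_extW, ← hydef, hrdef, resid_eq_sub, ← hwTdef]
  have hzz : (1 - δ) * (z ⬝ᵥ z) ≤ R := by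
    have h := (hRIP z ⟨C, hC_card, hz_supp⟩).1
    rw [hMz] at h
    exact h
  set X := ∑ i ∈ L \ T, (x i) ^ 2 with hXdef
  have hXpos : 0 < X := by
    obtain ⟨i0, hi0⟩ := hLT_ne
    have hxi0 : x i0 ≠ 0 := (hsupp i0).2 (Finset.mem_sdiff.1 hi0).1
    exact Finset.sum_pos' (fun i _ => sq_nonneg _) ⟨i0, hi0, by positivity⟩
  have hXz : X ≤ z ⬝ᵥ z := by
    have h1 : X = ∑ i ∈ L \ T, z i * z i := by
      refine Finset.sum_congr rfl fun i hi => ?_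
      have hiT : i ∉ T := (Finset.mem_sdiff.1 hi).2
      simp [hzdef, extW_notMem _ hiT]
      ring
    rw [h1]
    exact Finset.sum_le_sum_of_subset_of_nonneg (Finset.subset_univ _)
      (fun i _ _ => mul_self_nonneg _)
  have hRX : (1 - δ) * X ≤ R := le_trans (mul_le_mul_of_nonneg_left hXz ha.le) hzz
  -- the correlations u i
  set u : Fin n → ℝ := fun i => (fun r0 => M r0 i) ⬝ᵥ r with hudef
  have huT : ∀ j ∈ T, u j = 0 := fun j hj => col_dot_resid M hinvT y hj
  have hRsum : R = ∑ i ∈ L \ T, x i * u i := by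
    have hyr : y - r = colsOf M T *ᵥ wT := by
      rw [hrdef, resid_eq_sub, ← hwTdef]
      abel
    have hr_orth : r ⬝ᵥ (y - r) = 0 := by
      rw [hyr, dotProduct_mulVec, ← mulVec_transpose, hrdef, colsT_mulVec_resid M hinvT y,
        zero_dotProduct]
    have h1 : R = r ⬝ᵥ y := by
      have : r ⬝ᵥ y = r ⬝ᵥ r + r ⬝ᵥ (y - r) := by
        rw [← dotProduct_add]
        congr 1
        abel
      rw [this, hr_orth, hRdef]
      ring
    have h2 : r ⬝ᵥ y = ∑ i, u i * x i := by
      rw [hydef, dotProduct_mulVec, ← mulVec_transpose]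
      refine Finset.sum_congr rfl fun i _ => ?_
      simp [hudef, mulVec, dotProduct, transpose_apply]
    have h3 : ∑ i, u i * x i = ∑ i ∈ L \ T, u i * x i := by
      apply sum_of_support
      intro i hi
      by_cases hiL : i ∈ L
      · have hiT : i ∈ T := by
          by_contra hiT
          exact hi (Finset.mem_sdiff.2 ⟨hiL, hiT⟩)
        rw [huT i hiT, zero_mul]
      · rw [hx0 i hiL, mul_zero]
    rw [h1, h2, h3]
    exact Finset.sum_congr rfl fun i _ => mul_comm _ _
    -- choose best i0
  obtain ⟨i0, hi0_mem, hi0_max⟩ := Finset.exists_max_image (L \ T) (fun i => (u i) ^ 2) hLT_ne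
  have hCS : R ^ 2 ≤ X * ((q:ℝ) * (u i0) ^ 2) := by
    have hcs := Finset.sum_mul_sq_le_sq_mul_sq (L \ T) x u
    have hSU : ∑ i ∈ L \ T, (u i) ^ 2 ≤ (q:ℝ) * (u i0) ^ 2 := by
      have h := Finset.sum_le_card_nsmul (L \ T) (fun i => (u i) ^ 2) ((u i0) ^ 2)
        (fun i hi => hi0_max i hi)
      rw [nsmul_eq_mul] at h
      exact_mod_cast h
    rw [← hRsum] at hcs
    exact le_trans hcs (mul_le_mul_of_nonneg_left hSU hXpos.le)
  have hgain : (1 - δ) * R ≤ (q:ℝ) * (u i0) ^ 2 := by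
    have h1 : (1 - δ) * X * R ≤ R ^ 2 := by
      rw [pow_two]
      exact mul_le_mul_of_nonneg_right hRX hR_nonneg
    have h2 : X * ((1 - δ) * R) ≤ X * ((q:ℝ) * (u i0) ^ 2) := by
      calc X * ((1 - δ) * R) = (1 - δ) * X * R := by ring
        _ ≤ R ^ 2 := h1
        _ ≤ X * ((q:ℝ) * (u i0) ^ 2) := hCS
    exact le_of_mul_le_mul_left h2 hXpos
  have hi0L : i0 ∈ L := (Finset.mem_sdiff.1 hi0_mem).1
  have hi0T : i0 ∉ T := (Finset.mem_sdiff.1 hi0_mem).2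
  -- the enlarged set S
  set S := insert i0 T with hSdef
  have hTS : T ⊆ S := Finset.subset_insert _ _
  have hS_card : S.card = k + 1 := by rw [hSdef, Finset.card_insert_of_notMem hi0T, hT]
  have hSC : S ⊆ C := by
    rw [hSdef, hCdef]
    exact Finset.insert_subset (Finset.mem_union_left _ hi0L) Finset.subset_union_right
  have hinvS : IsUnit ((colsOf M S)ᵀ * colsOf M S).det :=
    gram_det_isUnit M hδlt1 hRIP S (by omega)
  set r' := residT M S *ᵥ y with hr'def
  set ρ := r' ⬝ᵥ r' with hρdef
  have hρ_nonneg : 0 ≤ ρ := dot_self_nonneg r'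
  -- gain step : ρ ≤ R - (u i0)^2
  have hstep1 : ρ ≤ R - (u i0) ^ 2 := by
    set g : Fin n → ℝ := extW T wT + (u i0) • (Pi.single i0 (1:ℝ) : Fin n → ℝ) with hgdef
    have hg_supp : ∀ i ∉ S, g i = 0 := by
      intro i hi
      rw [hSdef, Finset.mem_insert] at hi
      push_neg at hi
      simp [hgdef, extW_notMem _ hi.2, Pi.single_apply, hi.1]
    have hMg : y - M *ᵥ g = r - (u i0) • (fun r0 => M r0 i0) := by
      rw [hgdef, mulVec_add, mulVec_smul, mulVec_extW, mulVec_single_one]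
      have hyr : y - colsOf M T *ᵥ wT = r := by
        rw [hrdef, resid_eq_sub, ← hwTdef]
      rw [sub_add_eq_sub_sub, hyr]
    have hmin := resid_min M hinvS y g hg_supp
    rw [hMg, ← hr'def] at hmin
    have hexp : (r - (u i0) • (fun r0 => M r0 i0)) ⬝ᵥ (r - (u i0) • (fun r0 => M r0 i0))
        = R - (u i0) ^ 2 := by
      have h1 : r - (u i0) • (fun r0 => M r0 i0) = r + (-(u i0)) • (fun r0 => M r0 i0) := by
        rw [neg_smul, ← sub_eq_add_neg]
      rw [h1, dot_expand]
      have hcc : (fun r0 => M r0 i0) ⬝ᵥ (fun r0 => M r0 i0) = 1 := hunit i0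
      have hcr : (fun r0 => M r0 i0) ⬝ᵥ r = u i0 := rfl
      have hrc : r ⬝ᵥ (fun r0 => M r0 i0) = u i0 := (dotProduct_comm _ _).trans hcr
      rw [hcc, hcr, hrc, ← hRdef]
      ring
    rw [hexp] at hmin
    exact hmin
  have hstep1' : (q:ℝ) * ρ ≤ ((q:ℝ) - (1 - δ)) * R :=
    step1'_lemma hq0' hstep1 hgain
  -- the S-residual coefficients
  set wS := (((colsOf M S)ᵀ * colsOf M S)⁻¹) *ᵥ ((colsOf M S)ᵀ *ᵥ y) with hwSdef
  set z' : Fin n → ℝ := x - extW S wS with hz'def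
  have hz'_supp : ∀ i ∉ C, z' i = 0 := by
    intro i hi
    have hiS : i ∉ S := fun h => hi (hSC h)
    rw [hCdef, Finset.mem_union] at hi
    push_neg at hi
    simp [hz'def, hx0 i hi.1, extW_notMem _ hiS]
  have hMz' : M *ᵥ z' = r' := by
    rw [hz'def, mulVec_sub, mulVec_extW, ← hydef, hr'def, resid_eq_sub, ← hwSdef]
  set Z' := z' ⬝ᵥ z' with hZ'def
  have hZ'ρ : (1 - δ) * Z' ≤ ρ := by
    have h := (hRIP z' ⟨C, hC_card, hz'_supp⟩).1
    rw [hMz'] at h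
    exact h
  have hZ'_nonneg : 0 ≤ Z' := dot_self_nonneg z'
  -- v := z' restricted to T \ L
  set Nv := ∑ j ∈ T \ L, (z' j) ^ 2 with hNvdef
  have hNv_nonneg : 0 ≤ Nv := Finset.sum_nonneg fun j _ => sq_nonneg _
  have hNvZ' : Nv ≤ Z' := by
    have h1 : Nv = ∑ j ∈ T \ L, z' j * z' j := by
      refine Finset.sum_congr rfl fun j _ => ?_
      ring
    rw [h1, hZ'def]
    exact Finset.sum_le_sum_of_subset_of_nonneg (Finset.subset_univ _)
      (fun i _ _ => mul_self_nonneg _)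
  set vex : Fin n → ℝ := fun i => if i ∈ T \ L then z' i else 0 with hvexdef
  have hvex_supp : ∀ i ∉ C, vex i = 0 := by
    intro i hi
    have hnot : i ∉ T \ L := fun h => hi (Finset.mem_union_right _ (Finset.mem_sdiff.1 h).1)
    simp only [hvexdef]
    exact if_neg hnot
  have hvv : vex ⬝ᵥ vex = Nv := by
    have h1 : ∀ i ∉ T \ L, vex i * vex i = 0 := by
      intro i hi
      simp only [hvexdef]
      rw [if_neg hi, zero_mul]
    rw [show vex ⬝ᵥ vex = ∑ i, vex i * vex i from rfl, sum_of_support (T \ L) _ h1, hNvdef]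
    refine Finset.sum_congr rfl fun i hi => ?_
    simp only [hvexdef]
    rw [if_pos hi]
    ring
  have hvz : vex ⬝ᵥ z' = Nv := by
    have h1 : ∀ i ∉ T \ L, vex i * z' i = 0 := by
      intro i hi
      simp only [hvexdef]
      rw [if_neg hi, zero_mul]
    rw [show vex ⬝ᵥ z' = ∑ i, vex i * z' i from rfl, sum_of_support (T \ L) _ h1, hNvdef]
    refine Finset.sum_congr rfl fun i hi => ?_
    simp only [hvexdef]
    rw [if_pos hi]
    ring
  have hzv : z' ⬝ᵥ vex = Nv := by rw [dotProduct_comm]; exact hvz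
  have hMvz : (M *ᵥ vex) ⬝ᵥ (M *ᵥ z') = 0 := by
    rw [hMz', dotProduct_comm, dotProduct_mulVec, ← mulVec_transpose]
    rw [show (Mᵀ *ᵥ r') ⬝ᵥ vex = ∑ i, (Mᵀ *ᵥ r') i * vex i from rfl]
    apply Finset.sum_eq_zero
    intro i _
    by_cases hi : i ∈ T \ L
    · have hiS : i ∈ S := hTS (Finset.mem_sdiff.1 hi).1
      have : (Mᵀ *ᵥ r') i = 0 := by
        have hcol := col_dot_resid M hinvS y hiS
        rw [← hr'def] at hcol
        rw [← hcol]
        simp [mulVec, dotProduct, transpose_apply]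
      rw [this, zero_mul]
    · have hv0 : vex i = 0 := by
        simp only [hvexdef]
        exact if_neg hi
      rw [hv0, mul_zero]
  have hMzv : (M *ᵥ z') ⬝ᵥ (M *ᵥ vex) = 0 := by rw [dotProduct_comm]; exact hMvz
  -- key bound : Nv ≤ δ² Z'
  have hkeyNv : Nv ≤ δ ^ 2 * Z' := by
    rcases eq_or_lt_of_le hNv_nonneg with h0 | hNvpos
    · rw [← h0]
      exact mul_nonneg (sq_nonneg δ) hZ'_nonneg
    · have hZ'pos : 0 < Z' := lt_of_lt_of_le hNvpos hNvZ'
      set t := Real.sqrt (Z' / Nv) with htdef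
      have ht_pos : 0 < t := Real.sqrt_pos.2 (div_pos hZ'pos hNvpos)
      have ht2 : t ^ 2 = Z' / Nv := Real.sq_sqrt (div_pos hZ'pos hNvpos).le
      have ht2N : t ^ 2 * Nv = Z' := by
        rw [ht2]
        exact div_mul_cancel₀ Z' (ne_of_gt hNvpos)
      have hsupp_p : ∀ i ∉ C, (z' + t • vex) i = 0 := by
        intro i hi
        simp [hz'_supp i hi, hvex_supp i hi]
      have hsupp_m : ∀ i ∉ C, (z' + (-t) • vex) i = 0 := by
        intro i hi
        simp [hz'_supp i hi, hvex_supp i hi]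
      have hr1 := (hRIP (z' + t • vex) ⟨C, hC_card, hsupp_p⟩).1
      have hr2 := (hRIP (z' + (-t) • vex) ⟨C, hC_card, hsupp_m⟩).2
      have eps : (z' + t • vex) ⬝ᵥ (z' + t • vex) = Z' + 2 * t * Nv + t ^ 2 * Nv := by
        rw [dot_expand, hzv, hvz, ← hZ'def, hvv]
        ring
      have ems : (z' + (-t) • vex) ⬝ᵥ (z' + (-t) • vex) = Z' - 2 * t * Nv + t ^ 2 * Nv := by
        rw [dot_expand, hzv, hvz, ← hZ'def, hvv]
        ring
      have hMae : M *ᵥ (z' + t • vex) = M *ᵥ z' + t • (M *ᵥ vex) := by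
        rw [mulVec_add, mulVec_smul]
      have hMam : M *ᵥ (z' + (-t) • vex) = M *ᵥ z' + (-t) • (M *ᵥ vex) := by
        rw [mulVec_add, mulVec_smul]
      have eMp : (M *ᵥ (z' + t • vex)) ⬝ᵥ (M *ᵥ (z' + t • vex))
          = ρ + t ^ 2 * ((M *ᵥ vex) ⬝ᵥ (M *ᵥ vex)) := by
        rw [hMae, dot_expand, hMvz, hMzv, hMz', ← hρdef]
        ring
      have eMm : (M *ᵥ (z' + (-t) • vex)) ⬝ᵥ (M *ᵥ (z' + (-t) • vex))
          = ρ + t ^ 2 * ((M *ᵥ vex) ⬝ᵥ (M *ᵥ vex)) := by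
        rw [hMam, dot_expand, hMvz, hMzv, hMz', ← hρdef]
        ring
      rw [eps, eMp] at hr1
      rw [ems, eMm] at hr2
      have hchain : (1 - δ) * (Z' + 2 * t * Nv + t ^ 2 * Nv)
          ≤ (1 + δ) * (Z' - 2 * t * Nv + t ^ 2 * Nv) := le_trans hr1 hr2
      exact chain_lemma ht_pos hNv_nonneg hZ'pos hδ0 hchain ht2N
  -- choose the swap-out index j0
  obtain ⟨j0, hj0_mem, hj0_min⟩ := Finset.exists_min_image (T \ L) (fun j => (z' j) ^ 2) hTL_ne
  have hj0T : j0 ∈ T := (Finset.mem_sdiff.1 hj0_mem).1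
  have hj0L : j0 ∉ L := (Finset.mem_sdiff.1 hj0_mem).2
  have hj0S : j0 ∈ S := hTS hj0T
  have hmin_j : (q:ℝ) * (z' j0) ^ 2 ≤ Nv := by
    have h := Finset.card_nsmul_le_sum (T \ L) (fun j => (z' j) ^ 2) ((z' j0) ^ 2)
      (fun j hj => hj0_min j hj)
    rw [nsmul_eq_mul, ← hq_eq] at h
    exact_mod_cast h
  -- the swapped set T'
  have hj0i0 : j0 ≠ i0 := fun h => hi0T (h ▸ hj0T)
  set T' := (insert i0 T).erase j0 with hT'def
  have hinvT' : IsUnit ((colsOf M T')ᵀ * colsOf M T').det := by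
    apply gram_det_isUnit M hδlt1 hRIP T'
    have h1 : T'.card ≤ S.card := by
      rw [hT'def, hSdef]
      exact Finset.card_le_card (Finset.erase_subset _ _)
    omega
  set wval := extW S wS j0 with hwvaldef
  have hzj0 : z' j0 = -wval := by
    rw [hz'def, hwvaldef]
    simp [hx0 j0 hj0L]
  -- final step : the T' residual is at most ρ + wval²
  set g' : Fin n → ℝ := Function.update (extW S wS) j0 0 with hg'def
  have hg'_supp : ∀ i ∉ T', g' i = 0 := by
    intro i hi
    by_cases h : i = j0
    · rw [hg'def, h]
      simp
    · have hiS : i ∉ S := by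
        intro hiS
        exact hi (by rw [hT'def, Finset.mem_erase]; exact ⟨h, hSdef ▸ hiS⟩)
      rw [hg'def]
      rw [Function.update_of_ne h]
      exact extW_notMem _ hiS
  have hdiff : extW S wS - g' = wval • (Pi.single j0 (1:ℝ) : Fin n → ℝ) := by
    funext i
    by_cases h : i = j0
    · subst h
      simp [hg'def, Pi.single_apply, hwvaldef]
    · simp [hg'def, Function.update_of_ne h, Pi.single_apply, h]
  have hMg' : y - M *ᵥ g' = r' + wval • (fun r0 => M r0 j0) := by
    have h1 : M *ᵥ extW S wS - M *ᵥ g' = wval • (fun r0 => M r0 j0) := by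
      rw [← mulVec_sub, hdiff, mulVec_smul, mulVec_single_one]
    have h2 : y - M *ᵥ extW S wS = r' := by
      rw [mulVec_extW, hr'def, resid_eq_sub, ← hwSdef]
    calc y - M *ᵥ g' = (y - M *ᵥ extW S wS) + (M *ᵥ extW S wS - M *ᵥ g') := by abel
      _ = r' + wval • (fun r0 => M r0 j0) := by rw [h1, h2]
  have hfinal1 : (residT M T' *ᵥ y) ⬝ᵥ (residT M T' *ᵥ y) ≤ ρ + wval ^ 2 := by
    have hmin := resid_min M hinvT' y g' hg'_supp
    rw [hMg'] at hmin
    have hexp : (r' + wval • (fun r0 => M r0 j0)) ⬝ᵥ (r' + wval • (fun r0 => M r0 j0))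
        = ρ + wval ^ 2 := by
      rw [dot_expand]
      have hcc : (fun r0 => M r0 j0) ⬝ᵥ (fun r0 => M r0 j0) = 1 := hunit j0
      have hcr : (fun r0 => M r0 j0) ⬝ᵥ r' = 0 := by
        have := col_dot_resid M hinvS y hj0S
        rw [← hr'def] at this
        exact this
      have hrc : r' ⬝ᵥ (fun r0 => M r0 j0) = 0 := by rw [dotProduct_comm]; exact hcr
      rw [hcc, hcr, hrc, ← hρdef]
      ring
    rw [hexp] at hmin
    exact hmin
  -- assemble everything
  set F := (residT M T' *ᵥ y) ⬝ᵥ (residT M T' *ᵥ y) with hFdef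
  have h81 : (q:ℝ) * wval ^ 2 ≤ Nv := by
    have hww : wval ^ 2 = (z' j0) ^ 2 := by rw [hzj0]; ring
    rw [hww]
    exact hmin_j
  have hfin : F ≤ (1 - γ / (k:ℝ)) * R :=
    assemble_lemma hδ0 ha hq1' hqk' hR_nonneg hρ_nonneg hγ_pos hkey hfinal1 h81 hkeyNv hZ'ρ hstep1'
  exact ⟨hγ_pos, i0, hi0_mem, j0, hj0_mem, hfin⟩

end
end
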